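/- arXiv:1605.06053 — 4 statements merged into one kernel-verified Lean document; each statement's English description precedes it below -/
import Mathlib

section
/- For q not a root of unity, nonnegative integers ν₁, ν₂ and a natural number n with n ≤ min(ν₁, ν₂), the identity ∑_{k=0}^n [n choose k]_q · q^{k(2n-ν₁-ν₂-2)} · [ν₁-n+k]_q! · [ν₂-k]_q! = q^{n(n-ν₁-1)} · [ν₁-n]_q! [ν₂-n]_q! [ν₁+ν₂-n+1]_q! / [ν₁+ν₂-2n+1]_q! holds. -/
noncomputable section
open Finset

/-- `q` is a nonzero complex number that is not a root of unity. -/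
def NotRootOfUnity (q : ℂ) : Prop := q ≠ 0 ∧ ∀ m : ℤ, m ≠ 0 → q ^ m ≠ 1

/-- The q-integer `[m]_q = (q^m - q^(-m))/(q - q⁻¹)`. -/
def qint (q : ℂ) (m : ℤ) : ℂ := (q ^ m - q ^ (-m)) / (q - q⁻¹)

/-- The q-factorial `[n]_q! = ∏_{m=1}^n [m]_q`. -/
def qfact (q : ℂ) (n : ℕ) : ℂ := ∏ m ∈ Finset.range n, qint q ((m : ℤ) + 1)


/-- The q-binomial coefficient `[n choose k]_q = [n]_q! / ([k]_q! [n-k]_q!)`. -/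
def qbinom (q : ℂ) (n k : ℕ) : ℂ := qfact q n / (qfact q k * qfact q (n - k))

variable {q : ℂ}

lemma hden (hq : NotRootOfUnity q) : q - q⁻¹ ≠ 0 := by
  intro h
  have h0 : q ≠ 0 := hq.1
  have h2 : q ^ (2:ℤ) = 1 := by
    have hqi : q = q⁻¹ := by linear_combination h
    have : q * q = 1 := by
      nth_rewrite 2 [hqi]
      field_simp
    rw [show (2:ℤ) = 1 + 1 by norm_num, zpow_add₀ h0, zpow_one, this]
  exact hq.2 2 (by norm_num) h2

lemma qint_ne_zero (hq : NotRootOfUnity q) (m : ℤ) (hm : m ≠ 0) : qint q m ≠ 0 := by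
  have h0 : q ≠ 0 := hq.1
  have hnum : q ^ m - q ^ (-m) ≠ 0 := by
    intro h
    have heq : q ^ m = q ^ (-m) := by linear_combination h
    have h2 : q ^ (2*m) = 1 := by
      have := congrArg (· * q ^ m) heq
      rw [← zpow_add₀ h0, ← zpow_add₀ h0] at this
      rw [two_mul]
      rw [this]
      simp
    exact hq.2 (2*m) (by omega) h2
  exact div_ne_zero hnum (hden hq)

lemma qfact_succ (n : ℕ) : qfact q (n+1) = qfact q n * qint q ((n:ℤ)+1) :=
  Finset.prod_range_succ _ _

lemma qfact_ne_zero (hq : NotRootOfUnity q) (n : ℕ) : qfact q n ≠ 0 := by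
  induction n with
  | zero => simp [qfact]
  | succ n ih =>
    rw [qfact_succ]
    exact mul_ne_zero ih (qint_ne_zero hq _ (by omega))

lemma qint_add (hq : NotRootOfUnity q) (x y : ℤ) :
    qint q (x + y) = q ^ x * qint q y + q ^ (-y) * qint q x := by
  have h0 : q ≠ 0 := hq.1
  have hd := hden hq
  rw [qint, qint, qint, ← mul_div_assoc, ← mul_div_assoc, ← add_div]
  congr 1
  rw [neg_add, zpow_add₀ h0, zpow_add₀ h0]
  ring

lemma qbinom_zero (hq : NotRootOfUnity q) (n : ℕ) : qbinom q n 0 = 1 := by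
  rw [qbinom, Nat.sub_zero, show qfact q 0 = 1 from rfl, one_mul,
    div_self (qfact_ne_zero hq n)]

lemma qbinom_self (hq : NotRootOfUnity q) (n : ℕ) : qbinom q n n = 1 := by
  rw [qbinom]
  simp only [Nat.sub_self]
  rw [show qfact q 0 = 1 from rfl, mul_one, div_self (qfact_ne_zero hq n)]


lemma qbinom_pascal (hq : NotRootOfUnity q) (j m : ℕ) :
    qbinom q (j+m+2) (j+1)
      = q ^ (-((j:ℤ)+1)) * qbinom q (j+m+1) (j+1) + q ^ ((m:ℤ)+1) * qbinom q (j+m+1) j := by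
  have h0 : q ≠ 0 := hq.1
  rw [qbinom, qbinom, qbinom,
    show j+m+2-(j+1) = m+1 by omega, show j+m+1-(j+1) = m by omega,
    show j+m+1-j = m+1 by omega,
    show j+m+2 = (j+m+1)+1 by omega, qfact_succ,
    show ((j+m+1 : ℕ):ℤ)+1 = ((m:ℤ)+1)+((j:ℤ)+1) by push_cast; ring,
    qint_add hq ((m:ℤ)+1) ((j:ℤ)+1),
    show (j:ℕ)+1 = j+1 from rfl, qfact_succ j, qfact_succ m]
  have nz1 : qfact q j ≠ 0 := qfact_ne_zero hq j
  have nz2 : qfact q m ≠ 0 := qfact_ne_zero hq m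
  have nz3 : qint q ((j:ℤ)+1) ≠ 0 := qint_ne_zero hq _ (by omega)
  have nz4 : qint q ((m:ℤ)+1) ≠ 0 := qint_ne_zero hq _ (by omega)
  field_simp
  ring

lemma merge1 {q : ℂ} (h0 : q ≠ 0) {e1 e2 e3 : ℤ} (he : e1 + e2 = e3) (X Y Z : ℂ) :
    q^e1 * X * q^e2 * Y * Z = X * q^e3 * Y * Z := by
  rw [← he, zpow_add₀ h0]; ring

lemma merge2 {q : ℂ} (h0 : q ≠ 0) {e1 e2 c e4 : ℤ} (he : e1 + e2 = c + e4) (X Y Z : ℂ) :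
    q^e1 * X * q^e2 * Y * Z = q^c * (X * q^e4 * Y * Z) := by
  rw [show q^e1 * X * q^e2 * Y * Z = (q^e1*q^e2)*(X*Y*Z) by ring, ← zpow_add₀ h0, he,
    zpow_add₀ h0]; ring

lemma merge3 {q : ℂ} (h0 : q ≠ 0) {e c e4 : ℤ} (he : e = c + e4) (Y Z : ℂ) :
    q^e * Y * Z = q^c * (q^e4 * Y * Z) := by
  rw [he, zpow_add₀ h0]; ring

lemma split_sum (n : ℕ) (T A B : ℕ → ℂ)
    (h0 : T 0 = A 0) (hn : T (n+1) = B n)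
    (hmid : ∀ k < n, T (k+1) = A (k+1) + B k) :
    ∑ k ∈ Finset.range (n+1+1), T k
      = ∑ k ∈ Finset.range (n+1), A k + ∑ k ∈ Finset.range (n+1), B k := by
  rw [Finset.sum_range_succ' T (n+1), Finset.sum_range_succ (fun k => T (k+1)) n,
      Finset.sum_range_succ' A n, Finset.sum_range_succ B n,
      Finset.sum_congr rfl (fun k hk => hmid k (Finset.mem_range.1 hk)), hn, h0,
      Finset.sum_add_distrib]
  ring

lemma final_scalar (hq : NotRootOfUnity q) (a b : ℕ) (e₁ e₂ e₃ : ℤ)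
    (h1 : e₁ = e₃ + ((a:ℤ)+1)) (h2 : e₂ = e₃ - ((b:ℤ)+1)) :
    q^e₁ * qint q ((b:ℤ)+1) + q^e₂ * qint q ((a:ℤ)+1)
      = q^e₃ * qint q ((a:ℤ)+(b:ℤ)+2) := by
  have h0 : q ≠ 0 := hq.1
  rw [show (a:ℤ)+(b:ℤ)+2 = ((a:ℤ)+1)+((b:ℤ)+1) by ring, qint_add hq ((a:ℤ)+1) ((b:ℤ)+1), mul_add,
      ← mul_assoc, ← mul_assoc, ← zpow_add₀ h0, ← zpow_add₀ h0, h1, h2,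
      show e₃ + -((b:ℤ)+1) = e₃ - ((b:ℤ)+1) by ring]

/-- The q-combinatorial identity
`∑_{k=0}^n [n choose k]_q q^{k(2n-ν₁-ν₂-2)} [ν₁-n+k]_q! [ν₂-k]_q!
  = q^{n(n-ν₁-1)} [ν₁-n]_q! [ν₂-n]_q! [ν₁+ν₂-n+1]_q! / [ν₁+ν₂-2n+1]_q!`. -/
theorem q_identity_c (q : ℂ) (hq : NotRootOfUnity q) (ν₁ ν₂ n : ℕ)
    (h₁ : n ≤ ν₁) (h₂ : n ≤ ν₂) :
    ∑ k ∈ Finset.range (n + 1),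
        qbinom q n k * q ^ ((k : ℤ) * (2 * (n : ℤ) - (ν₁ : ℤ) - (ν₂ : ℤ) - 2)) *
          qfact q (ν₁ - n + k) * qfact q (ν₂ - k)
      = q ^ ((n : ℤ) * ((n : ℤ) - (ν₁ : ℤ) - 1)) *
          (qfact q (ν₁ - n) * qfact q (ν₂ - n) * qfact q (ν₁ + ν₂ - n + 1) /
            qfact q (ν₁ + ν₂ - 2 * n + 1)) := by
  have h0 : q ≠ 0 := hq.1
  induction n generalizing ν₁ ν₂ with
  | zero =>
    rw [Finset.sum_range_one]
    simp only [Nat.cast_zero, zero_mul, zpow_zero, Nat.sub_zero, Nat.add_zero, one_mul,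
      Nat.mul_zero, mul_one]
    rw [qbinom_zero hq, one_mul, mul_div_assoc, div_self (qfact_ne_zero hq _), mul_one]
  | succ n IH =>
    obtain ⟨a, rfl⟩ : ∃ a, ν₁ = a + (n+1) := ⟨ν₁ - (n+1), by omega⟩
    obtain ⟨b, rfl⟩ : ∃ b, ν₂ = b + (n+1) := ⟨ν₂ - (n+1), by omega⟩
    have hsplit := split_sum n
      (fun k => qbinom q (n+1) k *
          q ^ ((k:ℤ) * (2 * ((n+1:ℕ):ℤ) - ((a+(n+1):ℕ):ℤ) - ((b+(n+1):ℕ):ℤ) - 2)) *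
          qfact q (a+(n+1) - (n+1) + k) * qfact q (b+(n+1) - k))
      (fun k => qbinom q n k *
          q ^ ((k:ℤ) * (2 * (n:ℤ) - ((a+n:ℕ):ℤ) - ((b+(n+1):ℕ):ℤ) - 2)) *
          qfact q (a+n - n + k) * qfact q (b+(n+1) - k))
      (fun k => q ^ ((n:ℤ) + (2 * ((n+1:ℕ):ℤ) - ((a+(n+1):ℕ):ℤ) - ((b+(n+1):ℕ):ℤ) - 2)) *
          (qbinom q n k *
            q ^ ((k:ℤ) * (2 * (n:ℤ) - ((a+(n+1):ℕ):ℤ) - ((b+n:ℕ):ℤ) - 2)) *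
            qfact q (a+(n+1) - n + k) * qfact q (b+n - k)))
      ?_ ?_ ?_
    · rw [hsplit, IH (a+n) (b+(n+1)) (by omega) (by omega), ← Finset.mul_sum,
        IH (a+(n+1)) (b+n) (by omega) (by omega)]
      rw [show a+n-n = a by omega, show (b+(n+1))-n = b+1 by omega,
          show (a+n)+(b+(n+1))-n+1 = a+b+n+2 by omega,
          show (a+n)+(b+(n+1))-2*n+1 = a+b+2 by omega,
          show (a+(n+1))-n = a+1 by omega, show b+n-n = b by omega,
          show (a+(n+1))+(b+n)-n+1 = a+b+n+2 by omega,
          show (a+(n+1))+(b+n)-2*n+1 = a+b+2 by omega,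
          show (a+(n+1))-(n+1) = a by omega, show (b+(n+1))-(n+1) = b by omega,
          show (a+(n+1))+(b+(n+1))-(n+1)+1 = a+b+n+2 by omega,
          show (a+(n+1))+(b+(n+1))-2*(n+1)+1 = a+b+1 by omega]
      rw [qfact_succ b, qfact_succ a, show a+b+2 = (a+b+1)+1 by omega, qfact_succ (a+b+1),
          show ((a+b+1:ℕ):ℤ)+1 = (a:ℤ)+(b:ℤ)+2 by push_cast; ring]
      rw [← mul_assoc (q ^ ((n:ℤ) + (2 * ((n+1:ℕ):ℤ) - ((a+(n+1):ℕ):ℤ) - ((b+(n+1):ℕ):ℤ) - 2))),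
          ← zpow_add₀ h0]
      have hJ : qint q ((a:ℤ)+(b:ℤ)+2) ≠ 0 := qint_ne_zero hq _ (by omega)
      have hFd : qfact q (a+b+1) ≠ 0 := qfact_ne_zero hq _
      have key := final_scalar hq a b
        ((n:ℤ) * ((n:ℤ) - ((a+n:ℕ):ℤ) - 1))
        (((n:ℤ) + (2 * ((n+1:ℕ):ℤ) - ((a+(n+1):ℕ):ℤ) - ((b+(n+1):ℕ):ℤ) - 2)) +
          ((n:ℤ) * ((n:ℤ) - ((a+(n+1):ℕ):ℤ) - 1)))
        (((n+1:ℕ):ℤ) * (((n+1:ℕ):ℤ) - ((a+(n+1):ℕ):ℤ) - 1))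
        (by push_cast; ring) (by push_cast; ring)
      trans ((q ^ ((n:ℤ) * ((n:ℤ) - ((a+n:ℕ):ℤ) - 1)) * qint q ((b:ℤ)+1) +
          q ^ (((n:ℤ) + (2 * ((n+1:ℕ):ℤ) - ((a+(n+1):ℕ):ℤ) - ((b+(n+1):ℕ):ℤ) - 2)) +
            ((n:ℤ) * ((n:ℤ) - ((a+(n+1):ℕ):ℤ) - 1))) * qint q ((a:ℤ)+1)) *
          (qfact q a * qfact q b * qfact q (a+b+n+2) /
            (qfact q (a+b+1) * qint q ((a:ℤ)+(b:ℤ)+2))))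
      · ring
      · rw [key]
        field_simp
    · -- T 0 = A 0
      simp [qbinom_zero hq, show a+(n+1)-(n+1)+0 = a by omega, show a+n-n+0 = a by omega]
    · -- T (n+1) = B n
      beta_reduce
      rw [qbinom_self hq, qbinom_self hq, one_mul, one_mul,
          show a+(n+1)-(n+1)+(n+1) = a+n+1 by omega, show (a+(n+1))-n+n = a+n+1 by omega,
          show b+(n+1)-(n+1) = b by omega, show b+n-n = b by omega]
      exact merge3 h0 (by push_cast; ring) _ _
    · -- middle Pascal
      intro k hk
      beta_reduce
      have hp := qbinom_pascal hq k (n-1-k)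
      rw [show k+(n-1-k)+2 = n+1 by omega, show k+(n-1-k)+1 = n by omega,
          show ((n-1-k:ℕ):ℤ)+1 = (n:ℤ)-(k:ℤ) by omega] at hp
      rw [hp, add_mul, add_mul, add_mul]
      simp only [show a+(n+1)-(n+1)+(k+1) = a+k+1 by omega,
        show a+n-n+(k+1) = a+k+1 by omega, show (a+(n+1))-n+k = a+k+1 by omega,
        show b+(n+1)-(k+1) = b+(n-k) by omega, show b+n-k = b+(n-k) by omega]
      congr 1
      · exact merge1 h0 (by push_cast; ring) _ _ _
      · exact merge2 h0 (by push_cast; ring) _ _ _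
end
end

section
/- In the tensor power M₂^{⊗s} of the 2-dimensional irreducible U_q(sl₂)-module, for 0 ≤ k ≤ s the vector θ_k^(s) = F^k.(e₀ ⊗ ··· ⊗ e₀) equals q^{binomial(k,2)} [k]_q! times the sum over all subsets 1 ≤ r₁ < ··· < r_k ≤ s of q^{∑_{i=1}^k (1 - r_i)} · (e_{l₁} ⊗ ··· ⊗ e_{l_s}), where l_i = 1 if i ∈ {r₁,...,r_k} and l_i = 0 otherwise. -/
/-! `F.e_m` is a sum over the positions `i` carrying `e₁` in `m` (moved back to `e₀`), and the
`K⁻¹` legs to the left of `i` contribute `q^{2r - i}`, where `r` counts the `e₁`'s left of `i`.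
Since removing `i` from a subset raises its weight `-∑ i` by `i`, `F` sends the `q`-weighted sum
over `k`-subsets to `1 + q² + ⋯ + q^{2k} = q^k [k+1]_q` times the weighted sum over
`(k+1)`-subsets, and induction on `k` produces the coefficient `q^{C(k,2)} [k]_q!`. -/

noncomputable section
open Finset

/-- Coefficient model of the tensor power `M₂^{⊗s}` of the two-dimensional irreducible
`U_q(sl₂)`-module: a vector is the coefficient function of the basis
`e_{l₁} ⊗ ⋯ ⊗ e_{l_s}` (index `0` is the leftmost tensorand). -/
abbrev V (s : ℕ) := (Fin s → Fin 2) → ℂ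

/-- The highest weight vector `e₀ ⊗ ⋯ ⊗ e₀` of `M₂^{⊗s}`. -/
def e0 (s : ℕ) : V s := fun m => if ∀ i, m i = 0 then 1 else 0

/-- Action of `F` on `M₂^{⊗s}` via `Δ^(s)(F) = ∑ᵢ (K⁻¹)^{⊗(i-1)} ⊗ F ⊗ 1^{⊗(s-i)}`
(the first coproduct leg acts on the leftmost tensorand;
`F.e₀ = e₁`, `F.e₁ = 0`, `K⁻¹.e_l = q^{2l-1} e_l` in `M₂`). -/
def Fop (q : ℂ) (s : ℕ) (v : V s) : V s :=
  fun m => ∑ i : Fin s,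
    (∏ j : Fin s, if j < i then q ^ (2 * ((m j : ℕ) : ℤ) - 1) else 1) *
      (if m i = 1 then v (Function.update m i 0) else 0)

/-- Action of `E` on `M₂^{⊗s}` via `Δ^(s)(E) = ∑ᵢ 1^{⊗(i-1)} ⊗ E ⊗ K^{⊗(s-i)}`
(`E.e₁ = e₀`, `E.e₀ = 0`, `K.e_l = q^{1-2l} e_l` in `M₂`). -/
def Eop (q : ℂ) (s : ℕ) (v : V s) : V s :=
  fun m => ∑ i : Fin s,
    (∏ j : Fin s, if i < j then q ^ (1 - 2 * ((m j : ℕ) : ℤ)) else 1) *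
      (if m i = 0 then v (Function.update m i 1) else 0)

/-- Action of `K` on `M₂^{⊗s}` (diagonal: `K.e_l = q^{1-2l} e_l` in each tensorand). -/
def Kop (q : ℂ) (s : ℕ) (v : V s) : V s :=
  fun m => (∏ j : Fin s, q ^ (1 - 2 * ((m j : ℕ) : ℤ))) * v m

/-- The vector `θ_k^(s) = F^k.(e₀ ⊗ ⋯ ⊗ e₀)` in `M₂^{⊗s}`. -/
def theta (q : ℂ) (s k : ℕ) : V s := (Fop q s)^[k] (e0 s)

lemma prod_zpow_eq_zpow_sum₀ {ι G₀ : Type*} [CommGroupWithZero G₀] {a : G₀} (ha : a ≠ 0)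
    (S : Finset ι) (f : ι → ℤ) : ∏ i ∈ S, a ^ f i = a ^ ∑ i ∈ S, f i := by
  induction S using Finset.cons_induction with
  | empty => simp
  | cons b S hb ih => rw [prod_cons, sum_cons, zpow_add₀ ha, ih]

lemma sum_comp_card_filter_lt {α M : Type*} [LinearOrder α] [AddCommMonoid M]
    (S : Finset α) (f : ℕ → M) : ∑ i ∈ S, f #{j ∈ S | j < i} = ∑ t ∈ range #S, f t := by
  induction S using Finset.induction_on_max with
  | empty => simp
  | insert a S ha ih =>
    have haS : a ∉ S := fun h => (ha a h).false
    have hfilter : ∀ i ∈ insert a S, {j ∈ insert a S | j < i} = {j ∈ S | j < i} := by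
      intro i hi
      rw [filter_insert, if_neg]
      exact (mem_insert.mp hi).elim (fun h => h ▸ lt_irrefl a) fun h => (ha i h).not_gt
    rw [sum_congr rfl fun i hi => congrArg (fun T => f #T) (hfilter i hi), sum_insert haS,
      card_insert_of_notMem haS, sum_range_succ, ih, filter_true_of_mem ha, add_comm]

lemma NotRootOfUnity.sq_ne_one {q : ℂ} (hq : NotRootOfUnity q) : q ^ 2 ≠ 1 := by
  exact_mod_cast hq.2 2 two_ne_zero

lemma pow_mul_qint_succ {q : ℂ} (hq0 : q ≠ 0) (hq2 : q ^ 2 ≠ 1) (k : ℕ) :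
    q ^ k * qint q (k + 1) = ∑ t ∈ range (k + 1), (q ^ 2) ^ t := by
  have hden : q - q⁻¹ ≠ 0 := by
    rw [sub_ne_zero]
    rintro h
    exact hq2 (by rw [sq]; nth_rewrite 1 [h]; exact inv_mul_cancel₀ hq0)
  rw [geom_sum_eq hq2, qint, show ((k : ℤ) + 1) = ((k + 1 : ℕ) : ℤ) by push_cast; ring,
    zpow_neg, zpow_natCast, eq_div_iff (sub_ne_zero.mpr hq2)]
  field_simp
  ring

variable {s : ℕ}

def ones (m : Fin s → Fin 2) : Finset (Fin s) := {j | m j = 1}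

@[simp]
lemma mem_ones {m : Fin s → Fin 2} {j : Fin s} : j ∈ ones m ↔ m j = 1 := by
  simp [ones]

lemma ones_update_zero (m : Fin s → Fin 2) (i : Fin s) :
    ones (Function.update m i 0) = (ones m).erase i := by
  ext j
  by_cases h : j = i <;> simp [h]

lemma ones_eq_empty_iff {m : Fin s → Fin 2} : ones m = ∅ ↔ ∀ i, m i = 0 := by
  simp only [eq_empty_iff_forall_notMem, mem_ones]
  exact forall_congr' fun i => by omega

lemma ones_eq_iff {m : Fin s → Fin 2} {A : Finset (Fin s)} :
    ones m = A ↔ ∀ i, (m i = 1 ↔ i ∈ A) := by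
  simp [Finset.ext_iff]

def weight (A : Finset (Fin s)) : ℤ := ∑ i ∈ A, (1 - ((i : ℕ) + 1) : ℤ)

lemma weight_erase {A : Finset (Fin s)} {i : Fin s} (hi : i ∈ A) :
    weight (A.erase i) = weight A + i := by
  rw [weight, weight, ← sum_erase_add A _ hi]
  ring

def basisSum (q : ℂ) (s k : ℕ) : V s := fun m =>
  ∑ A ∈ powersetCard k (univ : Finset (Fin s)),
    q ^ weight A * (if ∀ i : Fin s, (m i = 1 ↔ i ∈ A) then 1 else 0)

lemma basisSum_apply (q : ℂ) (k : ℕ) (m : Fin s → Fin 2) :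
    basisSum q s k m = if #(ones m) = k then q ^ weight (ones m) else 0 := by
  simp_rw [basisSum, ← ones_eq_iff, mul_ite, mul_one, mul_zero, sum_ite_eq,
    mem_powersetCard_univ]

lemma e0_eq_basisSum_zero (q : ℂ) : e0 s = basisSum q s 0 := by
  funext m
  rw [e0, basisSum_apply]
  by_cases h : ones m = ∅
  · rw [if_pos (ones_eq_empty_iff.mp h), h, if_pos card_empty, weight, sum_empty, zpow_zero]
  · rw [if_neg (mt ones_eq_empty_iff.mpr h), if_neg (mt card_eq_zero.mp h)]

lemma prod_Kinv_eq {q : ℂ} (hq : q ≠ 0) (m : Fin s → Fin 2) (i : Fin s) :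
    (∏ j : Fin s, if j < i then q ^ (2 * ((m j : ℕ) : ℤ) - 1) else 1)
      = q ^ (2 * (#{j ∈ ones m | j < i} : ℤ) - i) := by
  have hcoe : ∀ j, ((m j : ℕ) : ℤ) = if j ∈ ones m then 1 else 0 := by
    intro j
    simp only [mem_ones]
    generalize m j = x
    fin_cases x <;> rfl
  have hIio : #{j : Fin s | j < i} = (i : ℕ) := by
    rw [filter_gt_eq_Iio, Fin.card_Iio]
  rw [← prod_filter, prod_zpow_eq_zpow_sum₀ hq, sum_sub_distrib, ← mul_sum, sum_const, hIio]
  simp_rw [hcoe, sum_boole, filter_filter, and_comm (a := _ < i)]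
  simp [ones, filter_filter]

lemma Fop_apply {q : ℂ} (hq : q ≠ 0) (v : V s) (m : Fin s → Fin 2) :
    Fop q s v m = ∑ i ∈ ones m,
      q ^ (2 * (#{j ∈ ones m | j < i} : ℤ) - i) * v (Function.update m i 0) := by
  simp_rw [Fop, prod_Kinv_eq hq, mul_ite, mul_zero, ← mem_ones (m := m)]
  rw [sum_ite_mem, univ_inter]

lemma Fop_smul (q c : ℂ) (v : V s) : Fop q s (c • v) = c • Fop q s v := by
  funext m
  simp only [Fop, Pi.smul_apply, smul_eq_mul, mul_sum]
  refine sum_congr rfl fun i _ => ?_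
  split_ifs <;> ring

theorem Fop_basisSum {q : ℂ} (hq : q ≠ 0) (k : ℕ) :
    Fop q s (basisSum q s k) = (∑ t ∈ range (k + 1), (q ^ 2) ^ t) • basisSum q s (k + 1) := by
  funext m
  rw [Fop_apply hq, Pi.smul_apply, basisSum_apply, smul_eq_mul]
  simp_rw [basisSum_apply, ones_update_zero]
  by_cases hcard : #(ones m) = k + 1
  · have hterm : ∀ i ∈ ones m,
        q ^ (2 * (#{j ∈ ones m | j < i} : ℤ) - i) *
            (if #((ones m).erase i) = k then q ^ weight ((ones m).erase i) else 0)
          = q ^ weight (ones m) * (q ^ 2) ^ #{j ∈ ones m | j < i} := by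
      intro i hi
      rw [card_erase_of_mem hi, hcard, Nat.add_sub_cancel, if_pos rfl, weight_erase hi,
        ← pow_mul, zpow_sub₀ hq, zpow_add₀ hq, ← zpow_natCast q (2 * _)]
      push_cast
      field_simp
    rw [sum_congr rfl hterm, ← mul_sum, sum_comp_card_filter_lt (ones m) ((q ^ 2) ^ ·), hcard,
      if_pos rfl, mul_comm]
  · have hzero : ∀ i ∈ ones m, #((ones m).erase i) ≠ k := by
      intro i hi
      rw [card_erase_of_mem hi]
      have := card_pos.mpr ⟨i, hi⟩
      omega
    rw [if_neg hcard, mul_zero]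
    exact sum_eq_zero fun i hi => by rw [if_neg (hzero i hi), mul_zero]

theorem theta_eq_smul_basisSum {q : ℂ} (hq : NotRootOfUnity q) (s k : ℕ) :
    theta q s k = (q ^ Nat.choose k 2 * qfact q k) • basisSum q s k := by
  induction k with
  | zero => simp [theta, qfact, e0_eq_basisSum_zero q]
  | succ k ih =>
    have hcoeff : q ^ Nat.choose k 2 * qfact q k * ∑ t ∈ range (k + 1), (q ^ 2) ^ t
        = q ^ Nat.choose (k + 1) 2 * qfact q (k + 1) := by
      rw [← pow_mul_qint_succ hq.1 hq.sq_ne_one, qfact, qfact, prod_range_succ,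
        Nat.choose_succ_succ', Nat.choose_one_right, pow_add]
      push_cast
      ring
    rw [theta, Function.iterate_succ_apply', ← theta, ih, Fop_smul, Fop_basisSum hq.1,
      smul_smul, hcoeff]

theorem theta_expansion_general (q : ℂ) (hq : NotRootOfUnity q) (s k : ℕ) :
    theta q s k = fun m =>
      q ^ (Nat.choose k 2) * qfact q k *
        ∑ A ∈ Finset.powersetCard k (Finset.univ : Finset (Fin s)),
          q ^ (∑ i ∈ A, (1 - ((i : ℕ) + 1) : ℤ)) *
            (if ∀ i : Fin s, (m i = 1 ↔ i ∈ A) then 1 else 0) := by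
  exact theta_eq_smul_basisSum hq s k

/-- Explicit expansion of `θ_k^(s) = F^k.(e₀^{⊗s})` in the standard basis:
`θ_k^(s) = q^{C(k,2)} [k]_q! ∑_{1 ≤ r₁ < ⋯ < r_k ≤ s} q^{∑ᵢ(1-rᵢ)} e_{l₁} ⊗ ⋯ ⊗ e_{l_s}`,
where `l_i = 1` iff `i ∈ {r₁,…,r_k}` (a subset `A` of positions, `r = (i:ℕ)+1` being
the 1-indexed position). -/
theorem theta_expansion (q : ℂ) (hq : NotRootOfUnity q) (s k : ℕ) (hk : k ≤ s) :
    theta q s k = fun m =>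
      q ^ (Nat.choose k 2) * qfact q k *
        ∑ A ∈ Finset.powersetCard k (Finset.univ : Finset (Fin s)),
          q ^ (∑ i ∈ A, (1 - ((i : ℕ) + 1) : ℤ)) *
            (if ∀ i : Fin s, (m i = 1 ↔ i ∈ A) then 1 else 0) :=
  theta_expansion_general q hq s k
end
end

section
/- Let v be a vector in M₂^{⊗s} (s ≥ 1) satisfying E.v = 0, K.v = v, and π̂_j^(1)(v) = 0 for all j ∈ {1,...,s-1}, where π̂_j^(1) is the projection to the trivial subrepresentation in tensor positions j, j+1. Then v = 0. -/
noncomputable section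
open Finset

/-- Insert the values `a`, `b` at (0-indexed) positions `j`, `j+1` into the multi-index `m`. -/
def insert2 (s j : ℕ) (m : Fin (s - 2) → Fin 2) (a b : Fin 2) : Fin s → Fin 2 :=
  fun i =>
    if (i : ℕ) < j then (if h : (i : ℕ) < s - 2 then m ⟨i, h⟩ else 0)
    else if (i : ℕ) = j then a
    else if (i : ℕ) = j + 1 then b
    else (if h : (i : ℕ) - 2 < s - 2 then m ⟨(i : ℕ) - 2, h⟩ else 0)

/-- Matrix coefficients of the `U_q(sl₂)`-equivariant projection `π̂^(1) : M₂ ⊗ M₂ → ℂ`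
onto the trivial summand (normalized so that the Clebsch–Gordan singlet maps to `1`):
`π̂(e₀⊗e₀) = π̂(e₁⊗e₁) = 0`, `π̂(e₀⊗e₁) = (q⁻¹-q)/[2]_q`, `π̂(e₁⊗e₀) = (1-q⁻²)/[2]_q`
(the first argument is the left tensorand). -/
def pival (q : ℂ) (a b : Fin 2) : ℂ :=
  if a = 0 ∧ b = 1 then (q⁻¹ - q) / qint q 2
  else if a = 1 ∧ b = 0 then (1 - q ^ (-2 : ℤ)) / qint q 2
  else 0

/-- The projection `π̂_j^(1) : M₂^{⊗s} → M₂^{⊗(s-2)}` contracting the tensorands at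
(0-indexed) positions `j`, `j+1` with `π̂^(1)`. -/
def pihat (q : ℂ) (s j : ℕ) (v : V s) : V (s - 2) :=
  fun m => ∑ a : Fin 2, ∑ b : Fin 2, pival q a b * v (insert2 s j m a b)


/-!
The weight condition `K v = v` confines the support of `v` to multi-indices with `k` ones,
where `s = 2k`. The vanishing of `π̂_j v` says `v(⋯10⋯) = q · v(⋯01⋯)` at positions `j, j+1`,
and every multi-index with `k` ones is joined to the sorted one `0⋯01⋯1` by such swaps, so `v`
vanishes once its sorted coefficient `c` does. Finally `(E v)(0^{k+1} 1^{k-1}) = 0` reads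
`c q^{k+1} (1 + q^{-2} + ⋯ + q^{-2k}) = 0`, and the geometric sum is nonzero because `q` is not
a root of unity.
-/

namespace QTensor

lemma prod_zpow_eq_zpow_sum {ι G : Type*} [CommGroupWithZero G] {a : G} (ha : a ≠ 0)
    (s : Finset ι) (f : ι → ℤ) : ∏ i ∈ s, a ^ f i = a ^ ∑ i ∈ s, f i := by
  classical
  induction s using Finset.induction_on with
  | empty => simp
  | insert i s hi ih => rw [prod_insert hi, sum_insert hi, ih, zpow_add₀ ha]

lemma sum_comp_update_add {ι α M : Type*} [Fintype ι] [DecidableEq ι] [AddCommMonoid M]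
    (f : ι → α → M) (m : ι → α) (p : ι) (a : α) :
    ∑ i, f i (Function.update m p a i) + f p (m p) = ∑ i, f i (m i) + f p a := by
  rw [← add_sum_erase _ _ (mem_univ p), ← add_sum_erase _ _ (mem_univ p), Function.update_self,
    sum_congr rfl fun i hi => by rw [Function.update_of_ne (ne_of_mem_erase hi)]]
  abel

section MultiIndex

variable {s : ℕ}

def setPair (m : Fin s → Fin 2) (j : ℕ) (hj : j + 1 < s) (a b : Fin 2) : Fin s → Fin 2 :=
  Function.update (Function.update m ⟨j, by omega⟩ a) ⟨j + 1, hj⟩ b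

def dropPair (j : ℕ) (m : Fin s → Fin 2) : Fin (s - 2) → Fin 2 :=
  fun i => m ⟨if (i : ℕ) < j then i else i + 2, by split <;> omega⟩

lemma insert2_dropPair {j : ℕ} (hj : j + 1 < s) (m : Fin s → Fin 2) (a b : Fin 2) :
    insert2 s j (dropPair j m) a b = setPair m j hj a b := by
  funext i
  simp only [insert2, dropPair, setPair, Function.update_apply]
  rcases lt_trichotomy (i : ℕ) j with h | rfl | h
  · simp [Fin.ext_iff, h, show (i : ℕ) < s - 2 by omega, show (i : ℕ) ≠ j + 1 by omega, h.ne]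
  · simp [Fin.ext_iff]
  · obtain h | h := (Nat.succ_le_of_lt h).eq_or_lt
    · simp [Fin.ext_iff, ← h]
    · simp [Fin.ext_iff, h.ne', show ¬(i : ℕ) < j by omega, show (i : ℕ) ≠ j by omega,
        show (i : ℕ) - 2 < s - 2 by omega, show ¬(i : ℕ) - 2 < j by omega, Nat.sub_add_cancel
        (show 2 ≤ (i : ℕ) by omega)]

lemma setPair_self {j : ℕ} (hj : j + 1 < s) (m : Fin s → Fin 2) :
    setPair m j hj (m ⟨j, by omega⟩) (m ⟨j + 1, hj⟩) = m := by
  simp [setPair]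

lemma sum_setPair {M : Type*} [AddCommMonoid M] (f : Fin s → Fin 2 → M) {j : ℕ}
    (hj : j + 1 < s) (m : Fin s → Fin 2) (a b : Fin 2) :
    ∑ i, f i (setPair m j hj a b i) + f ⟨j, by omega⟩ (m ⟨j, by omega⟩)
        + f ⟨j + 1, hj⟩ (m ⟨j + 1, hj⟩)
      = ∑ i, f i (m i) + f ⟨j, by omega⟩ a + f ⟨j + 1, hj⟩ b := by
  have hne : (⟨j + 1, hj⟩ : Fin s) ≠ ⟨j, by omega⟩ := by simp [Fin.ext_iff]
  have h₁ := sum_comp_update_add f m ⟨j, by omega⟩ a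
  have h₂ := sum_comp_update_add f (Function.update m ⟨j, by omega⟩ a) ⟨j + 1, hj⟩ b
  rw [Function.update_of_ne hne] at h₂
  rw [setPair, add_right_comm, h₂, add_right_comm, h₁]

def numOnes (m : Fin s → Fin 2) : ℕ := ∑ i, (m i : ℕ)

def onesWeight (m : Fin s → Fin 2) : ℕ := ∑ i, (m i : ℕ) * (s - i)

lemma numOnes_setPair_swap {m : Fin s → Fin 2} {j : ℕ} (hj : j + 1 < s)
    (h₁ : m ⟨j, by omega⟩ = 1) (h₀ : m ⟨j + 1, hj⟩ = 0) :
    numOnes (setPair m j hj 0 1) = numOnes m := by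
  have := sum_setPair (fun _ x => (x : ℕ)) hj m 0 1
  simp only [h₁, h₀] at this
  simp only [numOnes]
  omega

lemma onesWeight_setPair_swap {m : Fin s → Fin 2} {j : ℕ} (hj : j + 1 < s)
    (h₁ : m ⟨j, by omega⟩ = 1) (h₀ : m ⟨j + 1, hj⟩ = 0) :
    onesWeight (setPair m j hj 0 1) + 1 = onesWeight m := by
  have := sum_setPair (fun i x => (x : ℕ) * (s - i)) hj m 0 1
  simp only [h₁, h₀] at this
  simp only [onesWeight]
  omega

lemma monotone_of_forall_not_descent {m : Fin s → Fin 2}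
    (h : ∀ j (hj : j + 1 < s), ¬(m ⟨j, by omega⟩ = 1 ∧ m ⟨j + 1, hj⟩ = 0)) : Monotone m := by
  cases s with
  | zero => exact Subsingleton.monotone m
  | succ n =>
    refine Fin.monotone_iff_le_succ.mpr fun i => ?_
    have := h i (by omega)
    simp only [Fin.castSucc, Fin.succ, Fin.castAdd, Fin.castLE] at this ⊢
    omega

def stepIndex (s t : ℕ) : Fin s → Fin 2 := fun l => if t ≤ (l : ℕ) then 1 else 0

lemma numOnes_eq_card (m : Fin s → Fin 2) : numOnes m = #{i | m i = 1} := by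
  rw [numOnes, card_filter]
  exact sum_congr rfl fun i _ => by split_ifs <;> omega

lemma eq_stepIndex_of_monotone {m : Fin s → Fin 2} (hm : Monotone m) :
    m = stepIndex s (s - numOnes m) := by
  have hones : ∀ i, m i = 1 → s - i ≤ numOnes m := fun i hi => by
    rw [numOnes_eq_card, ← Fin.card_Ici]
    refine card_le_card fun l hl => ?_
    have := hm (mem_Ici.mp hl)
    simp only [mem_filter, mem_univ, true_and]
    omega
  have hzeros : ∀ i, m i = 0 → numOnes m ≤ s - 1 - i := fun i hi => by
    rw [numOnes_eq_card, ← Fin.card_Ioi]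
    refine card_le_card fun l hl => mem_Ioi.mpr (lt_of_not_ge fun hle => ?_)
    have := hm hle
    simp only [mem_filter, mem_univ, true_and] at hl
    omega
  funext i
  have := hones i
  have := hzeros i
  simp only [stepIndex]
  split_ifs <;> omega

lemma update_stepIndex_succ_self {t : ℕ} (ht : t < s) :
    Function.update (stepIndex s (t + 1)) ⟨t, ht⟩ 1 = stepIndex s t := by
  funext l
  simp only [Function.update_apply, stepIndex, Fin.ext_iff]
  split_ifs <;> omega

lemma setPair_update_stepIndex {t i : ℕ} (hi : i + 1 < t) (ht : t ≤ s) :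
    setPair (Function.update (stepIndex s t) ⟨i, by omega⟩ 1) i (by omega) 0 1
      = Function.update (stepIndex s t) ⟨i + 1, by omega⟩ 1 := by
  funext l
  simp only [setPair, Function.update_apply, stepIndex, Fin.ext_iff]
  split_ifs <;> omega

theorem descent_induction {P : (Fin s → Fin 2) → Prop} (sorted : ∀ m, Monotone m → P m)
    (swap : ∀ m j (hj : j + 1 < s), m ⟨j, by omega⟩ = 1 → m ⟨j + 1, hj⟩ = 0 →
      P (setPair m j hj 0 1) → P m)
    (m : Fin s → Fin 2) : P m := by
  induction hw : onesWeight m using Nat.strong_induction_on generalizing m with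
  | _ w ih =>
    by_cases hdesc : ∃ j, ∃ hj : j + 1 < s, m ⟨j, by omega⟩ = 1 ∧ m ⟨j + 1, hj⟩ = 0
    · obtain ⟨j, hj, h₁, h₀⟩ := hdesc
      have := onesWeight_setPair_swap hj h₁ h₀
      exact swap m j hj h₁ h₀ (ih _ (by omega) _ rfl)
    · exact sorted m (monotone_of_forall_not_descent fun j hj hd => hdesc ⟨j, hj, hd⟩)

end MultiIndex

section Quantum

variable {q : ℂ} {s : ℕ} {v : V s}

lemma zpow_ne_zpow_of_notRootOfUnity (hq : NotRootOfUnity q) {a b : ℤ} (hab : a ≠ b) :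
    q ^ a ≠ q ^ b := fun h =>
  hq.2 (a - b) (sub_ne_zero.mpr hab) <| by
    rw [zpow_sub₀ hq.1, h, div_self (zpow_ne_zero _ hq.1)]

lemma pival_one_zero : pival q 1 0 = (1 - q ^ (-2 : ℤ)) / qint q 2 := by
  simp [pival]

lemma pival_zero_one (hq : q ≠ 0) : pival q 0 1 = -q * pival q 1 0 := by
  rw [pival_one_zero, show pival q 0 1 = (q⁻¹ - q) / qint q 2 by simp [pival]]
  field_simp
  ring

lemma pival_one_zero_ne_zero (hq : NotRootOfUnity q) : pival q 1 0 ≠ 0 := by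
  have hden : q ^ (1 : ℤ) - q ^ (-1 : ℤ) ≠ 0 :=
    sub_ne_zero.mpr (zpow_ne_zpow_of_notRootOfUnity hq (by norm_num))
  have hnum : q ^ (2 : ℤ) - q ^ (-2 : ℤ) ≠ 0 :=
    sub_ne_zero.mpr (zpow_ne_zpow_of_notRootOfUnity hq (by norm_num))
  have hone : q ^ (0 : ℤ) - q ^ (-2 : ℤ) ≠ 0 :=
    sub_ne_zero.mpr (zpow_ne_zpow_of_notRootOfUnity hq (by norm_num))
  rw [pival_one_zero, qint]
  simp only [zpow_one, zpow_neg_one, zpow_zero] at hden hone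
  exact div_ne_zero hone (div_ne_zero hnum hden)

lemma eq_mul_setPair_of_pihat_eq_zero (hq : NotRootOfUnity q) {j : ℕ} (hj : j + 1 < s)
    (hv : pihat q s j v = 0) {m : Fin s → Fin 2} (h₁ : m ⟨j, by omega⟩ = 1)
    (h₀ : m ⟨j + 1, hj⟩ = 0) : v m = q * v (setPair m j hj 0 1) := by
  have h := congrFun hv (dropPair j m)
  have hm : setPair m j hj 1 0 = m := h₁ ▸ h₀ ▸ setPair_self hj m
  have h00 : pival q 0 0 = 0 := by simp [pival]
  have h11 : pival q 1 1 = 0 := by simp [pival]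
  simp only [pihat, Fin.sum_univ_two, insert2_dropPair hj, hm, h00, h11, pival_zero_one hq.1,
    Pi.zero_apply] at h
  have key : pival q 1 0 * (v m - q * v (setPair m j hj 0 1)) = 0 := by linear_combination h
  exact sub_eq_zero.mp ((mul_eq_zero.mp key).resolve_left (pival_one_zero_ne_zero hq))

lemma eq_two_mul_numOnes_of_Kop_eq_self (hq : NotRootOfUnity q) (hK : Kop q s v = v)
    {m : Fin s → Fin 2} (hm : v m ≠ 0) : s = 2 * numOnes m := by
  have h := congrFun hK m
  rw [Kop, prod_zpow_eq_zpow_sum hq.1, mul_eq_right₀ hm] at h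
  by_contra hne
  refine hq.2 _ ?_ h
  have hsum : ∑ i, ((m i : ℕ) : ℤ) = numOnes m := by simp [numOnes]
  simp only [sum_sub_distrib, ← mul_sum, sum_const, card_univ, Fintype.card_fin, nsmul_eq_mul,
    mul_one, hsum]
  omega

lemma prod_Eop_coeff_stepIndex_succ (hq : q ≠ 0) {k : ℕ} (hs : s = 2 * k) (i : Fin s)
    (hi : (i : ℕ) ≤ k) :
    (∏ j : Fin s, if i < j then q ^ (1 - 2 * ((stepIndex s (k + 1) j : ℕ) : ℤ)) else 1)
      = q ^ (1 - (i : ℤ)) := by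
  have hterm : ∀ j : Fin s,
      (if i < j then q ^ (1 - 2 * ((stepIndex s (k + 1) j : ℕ) : ℤ)) else 1)
        = q ^ (if (i : ℕ) < j then 1 - 2 * (if k + 1 ≤ (j : ℕ) then 1 else 0) else 0 : ℤ) := by
    intro j
    simp only [stepIndex, Fin.lt_def]
    split_ifs <;> simp
  have hsum : ∀ n,
      ∑ x ∈ range n, (if (i : ℕ) < x then 1 - 2 * (if k + 1 ≤ x then 1 else 0) else 0 : ℤ)
        = ((min n (k + 1) - (i + 1) : ℕ) : ℤ) - ((n - (k + 1) : ℕ) : ℤ) := by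
    intro n
    induction n with
    | zero => simp
    | succ n ih =>
      rw [sum_range_succ, ih]
      split_ifs <;> omega
  rw [prod_congr rfl fun j _ => hterm j, Fin.prod_univ_eq_prod_range
    (fun x => q ^ (if (i : ℕ) < x then 1 - 2 * (if k + 1 ≤ x then 1 else 0) else 0 : ℤ)),
    prod_zpow_eq_zpow_sum hq, hsum]
  congr 1
  omega

variable (hq : NotRootOfUnity q) (hproj : ∀ j : ℕ, j + 2 ≤ s → pihat q s j v = 0)
include hq hproj

lemma apply_eq_zero_of_numOnes_eq {k : ℕ} (hsorted : v (stepIndex s (s - k)) = 0)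
    (m : Fin s → Fin 2) (hm : numOnes m = k) : v m = 0 := by
  induction m using descent_induction with
  | sorted m hmono => rwa [eq_stepIndex_of_monotone hmono, hm]
  | swap m j hj h₁ h₀ ih =>
    rw [eq_mul_setPair_of_pihat_eq_zero hq hj (hproj j hj) h₁ h₀,
      ih ((numOnes_setPair_swap hj h₁ h₀).trans hm), mul_zero]

lemma apply_update_stepIndex {k : ℕ} (hk : k < s) {i : ℕ} (hi : i ≤ k) :
    v (Function.update (stepIndex s (k + 1)) ⟨i, by omega⟩ 1)
      = q ^ (k - i) * v (stepIndex s k) := by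
  induction hi using Nat.decreasingInduction with
  | self => rw [update_stepIndex_succ_self, Nat.sub_self, pow_zero, one_mul]
  | of_succ i hik ih =>
    rw [eq_mul_setPair_of_pihat_eq_zero hq (j := i) (by omega) (hproj i (by omega)) (by simp)
      (by simp [stepIndex, Fin.ext_iff]; omega), setPair_update_stepIndex (by omega) (by omega),
      ih, ← mul_assoc, ← pow_succ', show k - (i + 1) + 1 = k - i by omega]

lemma Eop_summand_stepIndex_succ {k : ℕ} (hs : s = 2 * k) (i : Fin s) :
    (∏ j : Fin s, if i < j then q ^ (1 - 2 * ((stepIndex s (k + 1) j : ℕ) : ℤ)) else 1) *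
        (if stepIndex s (k + 1) i = 0 then v (Function.update (stepIndex s (k + 1)) i 1) else 0)
      = if (i : ℕ) ≤ k then v (stepIndex s k) * q ^ (k + 1) * (q ^ (-2 : ℤ)) ^ (i : ℕ)
        else 0 := by
  by_cases hi : (i : ℕ) ≤ k
  · have hzero : stepIndex s (k + 1) i = 0 := by simp [stepIndex]; omega
    rw [if_pos hzero, if_pos hi, prod_Eop_coeff_stepIndex_succ hq.1 hs i hi,
      apply_update_stepIndex hq hproj (k := k) (by omega) hi]
    have hexp :
        q ^ (1 - (i : ℤ)) * q ^ (k - (i : ℕ)) = q ^ (k + 1) * (q ^ (-2 : ℤ)) ^ (i : ℕ) := by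
      rw [← zpow_natCast, ← zpow_natCast, ← zpow_natCast, ← zpow_mul, ← zpow_add₀ hq.1,
        ← zpow_add₀ hq.1]
      congr 1
      push_cast
      omega
    linear_combination v (stepIndex s k) * hexp
  · have hone : stepIndex s (k + 1) i = 1 := by simp [stepIndex]; omega
    rw [if_neg (by simp [hone]), if_neg hi, mul_zero]

lemma apply_stepIndex_eq_zero_of_Eop_eq_zero (hE : Eop q s v = 0) {k : ℕ} (hk : 1 ≤ k)
    (hs : s = 2 * k) : v (stepIndex s k) = 0 := by
  have h := congrFun hE (stepIndex s (k + 1))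
  simp only [Eop, Pi.zero_apply, Eop_summand_stepIndex_succ hq hproj hs] at h
  have hrange : (range s).filter (· ≤ k) = range (k + 1) := by
    ext x
    simp only [mem_filter, mem_range]
    omega
  rw [Fin.sum_univ_eq_sum_range
    (fun i => if i ≤ k then v (stepIndex s k) * q ^ (k + 1) * (q ^ (-2 : ℤ)) ^ i else 0),
    ← sum_filter, hrange, ← mul_sum] at h
  have hgeom : ∑ i ∈ range (k + 1), (q ^ (-2 : ℤ)) ^ i ≠ 0 := fun h0 => by
    have := geom_sum_mul (q ^ (-2 : ℤ)) (k + 1)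
    rw [h0, zero_mul, eq_comm, sub_eq_zero, ← zpow_natCast, ← zpow_mul] at this
    exact hq.2 _ (by omega) this
  exact (mul_eq_zero.mp ((mul_eq_zero.mp h).resolve_right hgeom)).resolve_right
    (pow_ne_zero _ hq.1)

end Quantum

end QTensor

open QTensor

/-- If `v ∈ M₂^{⊗s}` (`s ≥ 1`) satisfies `E.v = 0`, `K.v = v`, and `π̂_j^(1)(v) = 0`
for all `j ∈ {1,…,s-1}` (0-indexed: all `j` with `j+2 ≤ s`), then `v = 0`. -/
theorem invariant_vector_with_vanishing_projections_is_zero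
    (q : ℂ) (hq : NotRootOfUnity q) (s : ℕ) (hs : 1 ≤ s) (v : V s)
    (hE : Eop q s v = 0) (hK : Kop q s v = v)
    (hproj : ∀ j : ℕ, j + 2 ≤ s → pihat q s j v = 0) :
    v = 0 := by
  funext m
  by_contra hm
  have hweight := eq_two_mul_numOnes_of_Kop_eq_self hq hK hm
  have hsorted : v (stepIndex s (s - numOnes m)) = 0 := by
    rw [show s - numOnes m = numOnes m by omega]
    exact apply_stepIndex_eq_zero_of_Eop_eq_zero hq hproj hE (by omega) hweight
  exact hm (apply_eq_zero_of_numOnes_eq hq hproj hsorted m rfl)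
end
end

section
/- For a vector v ∈ M₂^{⊗s} (s = d - 1 ≥ 1), the following are equivalent: (a) π̂_j^(1)(v) = 0 for all j ∈ {1,...,s-1}; (b) v lies in the unique subrepresentation of M₂^{⊗s} isomorphic to the (s+1)-dimensional irreducible M_d, namely the span of θ₀^(s),...,θ_s^(s) where θ_l^(s) = F^l.(e₀^{⊗s}). -/
noncomputable section
open Finset

namespace JW
variable {s : ℕ}

def wt (n : Fin s → Fin 2) : ℕ := (univ.filter fun i => n i = 1).card
def inv2 (n : Fin s → Fin 2) : ℕ :=
  (univ.filter fun p : Fin s × Fin s => p.1 < p.2 ∧ n p.1 = 1 ∧ n p.2 = 0).card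
def u (q : ℂ) (s k : ℕ) : V s := fun n => if wt n = k then q ^ inv2 n else 0
def sorted (s k : ℕ) : Fin s → Fin 2 := fun i => if (i : ℕ) < s - k then 0 else 1
def aB (n : Fin s → Fin 2) (i : Fin s) : ℕ := (univ.filter fun j => j < i ∧ n j = 1).card
def zA (n : Fin s → Fin 2) (i : Fin s) : ℕ := (univ.filter fun j => i < j ∧ n j = 0).card
def zB (n : Fin s → Fin 2) (i : Fin s) : ℕ := (univ.filter fun j => j < i ∧ n j = 0).card

lemma card_val_lt (m : ℕ) : (univ.filter fun i : Fin s => (i : ℕ) < m).card = min m s := by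
  rw [← Finset.card_range (min m s)]
  refine Finset.card_bij (fun i _ => (i : ℕ)) ?_ ?_ ?_
  · intro a ha; simp at ha ⊢; omega
  · intro a ha b hb h; exact Fin.ext h
  · intro b hb; simp at hb; exact ⟨⟨b, by omega⟩, by simp; omega, rfl⟩

lemma wt_le (n : Fin s → Fin 2) : wt n ≤ s := by
  have := Finset.card_filter_le (univ : Finset (Fin s)) fun i => n i = 1
  simpa [wt] using this

lemma card_zeros (n : Fin s → Fin 2) :
    (univ.filter fun i => n i = 0).card = s - wt n := by
  have h := Finset.card_filter_add_card_filter_not (s := (univ : Finset (Fin s)))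
    (p := fun i => n i = 1)
  have h2 : (univ.filter fun i => ¬ n i = 1) = univ.filter fun i => n i = 0 := by
    apply Finset.filter_congr; intro i _; constructor <;> (intro h; omega)
  rw [h2] at h
  simp only [Finset.card_univ, Fintype.card_fin] at h
  unfold wt; omega

lemma wt_eq_zero_iff (n : Fin s → Fin 2) : wt n = 0 ↔ ∀ i, n i = 0 := by
  unfold wt
  rw [Finset.card_eq_zero, Finset.filter_eq_empty_iff]
  constructor
  · intro h i; have := h (Finset.mem_univ i); omega
  · intro h i _; have := h i; omega

lemma inv2_eq_zero_of_wt_zero (n : Fin s → Fin 2) (h : wt n = 0) : inv2 n = 0 := by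
  rw [wt_eq_zero_iff] at h
  unfold inv2
  rw [Finset.card_eq_zero, Finset.filter_eq_empty_iff]
  intro p _ hp
  have := h p.1; omega

lemma wt_sorted (k : ℕ) (hk : k ≤ s) : wt (sorted s k) = k := by
  unfold wt sorted
  have h1 : (univ.filter fun i : Fin s => (if (i:ℕ) < s - k then (0:Fin 2) else 1) = 1)
      = univ.filter fun i : Fin s => ¬ ((i:ℕ) < s - k) := by
    apply Finset.filter_congr; intro i _
    split <;> simp_all
  rw [h1]
  have h2 := Finset.card_filter_add_card_filter_not
    (s := (univ : Finset (Fin s))) (p := fun i : Fin s => (i:ℕ) < s - k)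
  rw [card_val_lt] at h2
  simp only [Finset.card_univ, Fintype.card_fin] at h2
  omega

lemma inv2_sorted (k : ℕ) : inv2 (sorted s k) = 0 := by
  unfold inv2
  rw [Finset.card_eq_zero, Finset.filter_eq_empty_iff]
  intro p _ hp
  obtain ⟨h1, h2, h3⟩ := hp
  unfold sorted at h2 h3
  have h4 : (p.1 : ℕ) < (p.2 : ℕ) := h1
  split at h2 <;> split at h3 <;> simp_all <;> omega

lemma sort_of_inv2_zero (n : Fin s → Fin 2) (h : inv2 n = 0) : n = sorted s (wt n) := by
  unfold inv2 at h
  rw [Finset.card_eq_zero, Finset.filter_eq_empty_iff] at h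
  have H : ∀ p1 p2 : Fin s, p1 < p2 → n p1 = 1 → n p2 = 1 := by
    intro p1 p2 hlt h1
    have := h (Finset.mem_univ (p1, p2))
    simp only [not_and] at this
    have := this hlt h1
    omega
  funext i
  unfold sorted
  rcases (by omega : n i = 0 ∨ n i = 1) with h0 | h1
  · rw [if_pos, h0]
    -- ones ⊆ {l | i < l}
    have hsub : (univ.filter fun l => n l = 1) ⊆ univ.filter fun l : Fin s => (i:ℕ) < (l:ℕ) := by
      intro l hl
      simp only [Finset.mem_filter, Finset.mem_univ, true_and] at hl ⊢
      rcases lt_trichotomy l i with hc | hc | hc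
      · exact absurd (H l i hc hl) (by omega)
      · subst hc; omega
      · exact hc
    have hcard := Finset.card_le_card hsub
    have h3 : (univ.filter fun l : Fin s => (i:ℕ) < (l:ℕ)) =
        univ.filter fun l : Fin s => ¬ ((l:ℕ) < (i:ℕ) + 1) := by
      apply Finset.filter_congr; intro l _; constructor <;> (intro; omega)
    have h4 := Finset.card_filter_add_card_filter_not
      (s := (univ : Finset (Fin s))) (p := fun l : Fin s => (l:ℕ) < (i:ℕ) + 1)
    rw [card_val_lt] at h4
    simp only [Finset.card_univ, Fintype.card_fin] at h4
    rw [h3] at hcard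
    have hi : (i:ℕ) < s := i.isLt
    unfold wt
    omega
  · rw [if_neg, h1]
    have hsub : (univ.filter fun l : Fin s => ¬ ((l:ℕ) < (i:ℕ))) ⊆
        univ.filter fun l => n l = 1 := by
      intro l hl
      simp only [Finset.mem_filter, Finset.mem_univ, true_and] at hl ⊢
      rcases lt_trichotomy i l with hc | hc | hc
      · exact H i l hc h1
      · subst hc; exact h1
      · exact absurd (by exact_mod_cast hc) hl
    have hcard := Finset.card_le_card hsub
    have h4 := Finset.card_filter_add_card_filter_not
      (s := (univ : Finset (Fin s))) (p := fun l : Fin s => (l:ℕ) < (i:ℕ))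
    rw [card_val_lt] at h4
    simp only [Finset.card_univ, Fintype.card_fin] at h4
    have hi : (i:ℕ) < s := i.isLt
    unfold wt
    omega

def sw (j j1 : Fin s) (x : Fin s) : Fin s := if x = j then j1 else if x = j1 then j else x

lemma sw_sw (j j1 x : Fin s) : sw j j1 (sw j j1 x) = x := by
  unfold sw; split_ifs <;> simp_all

lemma sw_lt (j j1 : Fin s) (hj : (j1 : ℕ) = (j : ℕ) + 1) (a b : Fin s) (hab : a < b)
    (h : (a ≠ j ∧ b ≠ j1) ∨ (a ≠ j1 ∧ b ≠ j ∧ ¬(a = j ∧ b = j1))) :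
    sw j j1 a < sw j j1 b := by
  unfold sw
  split_ifs <;> simp only [Fin.lt_def, Fin.ext_iff, not_and, ne_eq] at * <;> omega

lemma swap_wt (n n' : Fin s → Fin 2) (j j1 : Fin s)
    (h1 : n j = 1) (h2 : n j1 = 0) (h1' : n' j = 0) (h2' : n' j1 = 1)
    (hoff : ∀ i, i ≠ j → i ≠ j1 → n i = n' i) : wt n' = wt n := by
  have hcomp : ∀ i, n' i = n (sw j j1 i) := by
    intro i; unfold sw; split_ifs with ha hb
    · subst ha; rw [h1', h2]
    · subst hb; rw [h2', h1]
    · exact (hoff i ha hb).symm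
  unfold wt
  refine Finset.card_bij (fun i _ => sw j j1 i) ?_ ?_ ?_
  · intro a ha; simp only [Finset.mem_filter, Finset.mem_univ, true_and] at ha ⊢
    rw [← hcomp a]; exact ha
  · intro a _ b _ h
    have := congrArg (sw j j1) h; rwa [sw_sw, sw_sw] at this
  · intro b hb; simp only [Finset.mem_filter, Finset.mem_univ, true_and] at hb ⊢
    exact ⟨sw j j1 b, by rw [hcomp (sw j j1 b), sw_sw]; exact hb, sw_sw j j1 b⟩

lemma swap_inv2 (n n' : Fin s → Fin 2) (j j1 : Fin s) (hj : (j1 : ℕ) = (j : ℕ) + 1)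
    (h1 : n j = 1) (h2 : n j1 = 0) (h1' : n' j = 0) (h2' : n' j1 = 1)
    (hoff : ∀ i, i ≠ j → i ≠ j1 → n i = n' i) : inv2 n = inv2 n' + 1 := by
  have hjj1 : j ≠ j1 := by intro h; rw [h, h2'] at h1'; exact absurd h1' (by omega)
  have hcomp : ∀ i, n' i = n (sw j j1 i) := by
    intro i; unfold sw; split_ifs with ha hb
    · subst ha; rw [h1', h2]
    · subst hb; rw [h2', h1]
    · exact (hoff i ha hb).symm
  have hswj : sw j j1 j = j1 := by simp [sw]
  have hswj1 : sw j j1 j1 = j := by simp [sw, hjj1.symm]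
  have hmem : ((j, j1) : Fin s × Fin s) ∈
      univ.filter fun p : Fin s × Fin s => p.1 < p.2 ∧ n p.1 = 1 ∧ n p.2 = 0 := by
    simp only [Finset.mem_filter, Finset.mem_univ, true_and]
    exact ⟨by rw [Fin.lt_def]; omega, h1, h2⟩
  have key : inv2 n' =
      ((univ.filter fun p : Fin s × Fin s => p.1 < p.2 ∧ n p.1 = 1 ∧ n p.2 = 0).erase (j, j1)).card := by
    unfold inv2
    refine Finset.card_bij (fun p _ => (sw j j1 p.1, sw j j1 p.2)) ?_ ?_ ?_
    · intro p hp
      simp only [Finset.mem_filter, Finset.mem_univ, true_and] at hp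
      obtain ⟨ho, hp1, hp2⟩ := hp
      rw [hcomp] at hp1 hp2
      have hp1j : p.1 ≠ j := by
        intro h; rw [h, hswj, h2] at hp1; exact absurd hp1 (by omega)
      have hp2j1 : p.2 ≠ j1 := by
        intro h; rw [h, hswj1, h1] at hp2; exact absurd hp2 (by omega)
      have hord : sw j j1 p.1 < sw j j1 p.2 := sw_lt j j1 hj _ _ ho (Or.inl ⟨hp1j, hp2j1⟩)
      rw [Finset.mem_erase]
      constructor
      · intro hcontra
        have e1 : sw j j1 p.1 = j := congrArg Prod.fst hcontra
        have e2 : sw j j1 p.2 = j1 := congrArg Prod.snd hcontra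
        have f1 : p.1 = j1 := by
          have := congrArg (sw j j1) e1; rwa [sw_sw, hswj] at this
        have f2 : p.2 = j := by
          have := congrArg (sw j j1) e2; rwa [sw_sw, hswj1] at this
        rw [f1, f2] at ho
        rw [Fin.lt_def] at ho; omega
      · simp only [Finset.mem_filter, Finset.mem_univ, true_and]
        exact ⟨hord, hp1, hp2⟩
    · intro a _ b _ h
      have ha := congrArg (fun x : Fin s × Fin s => sw j j1 x.1) h
      have hb := congrArg (fun x : Fin s × Fin s => sw j j1 x.2) h
      simp only [sw_sw] at ha hb
      exact Prod.ext ha hb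
    · intro b hb
      rw [Finset.mem_erase] at hb
      obtain ⟨hbne, hb⟩ := hb
      simp only [Finset.mem_filter, Finset.mem_univ, true_and] at hb
      obtain ⟨ho, hb1, hb2⟩ := hb
      have hb1j1 : b.1 ≠ j1 := by intro h; rw [h, h2] at hb1; exact absurd hb1 (by omega)
      have hb2j : b.2 ≠ j := by intro h; rw [h, h1] at hb2; exact absurd hb2 (by omega)
      have hbne' : ¬ (b.1 = j ∧ b.2 = j1) := by
        rintro ⟨x1, x2⟩; exact hbne (by rw [← x1, ← x2])
      refine ⟨(sw j j1 b.1, sw j j1 b.2), ?_, by simp [sw_sw]⟩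
      simp only [Finset.mem_filter, Finset.mem_univ, true_and]
      refine ⟨sw_lt j j1 hj _ _ ho (Or.inr ⟨hb1j1, hb2j, hbne'⟩), ?_, ?_⟩
      · rw [hcomp (sw j j1 b.1), sw_sw]; exact hb1
      · rw [hcomp (sw j j1 b.2), sw_sw]; exact hb2
  rw [key, Finset.card_erase_of_mem hmem]
  unfold inv2
  have : 0 < (univ.filter fun p : Fin s × Fin s => p.1 < p.2 ∧ n p.1 = 1 ∧ n p.2 = 0).card :=
    Finset.card_pos.mpr ⟨_, hmem⟩
  omega

def del (s j : ℕ) (n : Fin s → Fin 2) : Fin (s - 2) → Fin 2 :=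
  fun i => if (i : ℕ) < j then n ⟨i, by omega⟩ else n ⟨(i : ℕ) + 2, by omega⟩

lemma insert2_apply_j (j : ℕ) (hj : j + 2 ≤ s) (m : Fin (s - 2) → Fin 2) (a b : Fin 2) :
    insert2 s j m a b ⟨j, by omega⟩ = a := by
  unfold insert2
  rw [if_neg (by simp), if_pos (by simp)]

lemma insert2_apply_j1 (j : ℕ) (hj : j + 2 ≤ s) (m : Fin (s - 2) → Fin 2) (a b : Fin 2) :
    insert2 s j m a b ⟨j + 1, by omega⟩ = b := by
  unfold insert2
  rw [if_neg (by simp), if_neg (by simp), if_pos (by simp)]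

lemma insert2_apply_off (j : ℕ) (m : Fin (s - 2) → Fin 2) (a b a' b' : Fin 2) (i : Fin s)
    (hij : (i : ℕ) ≠ j) (hij1 : (i : ℕ) ≠ j + 1) :
    insert2 s j m a b i = insert2 s j m a' b' i := by
  unfold insert2
  by_cases h : (i : ℕ) < j
  · simp [h]
  · simp [h, hij, hij1]

lemma insert2_del_off (j : ℕ) (hj : j + 2 ≤ s) (n : Fin s → Fin 2) (a b : Fin 2) (i : Fin s)
    (hij : (i : ℕ) ≠ j) (hij1 : (i : ℕ) ≠ j + 1) :
    insert2 s j (del s j n) a b i = n i := by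
  unfold insert2 del
  rcases Nat.lt_trichotomy (i : ℕ) j with h | h | h
  · rw [if_pos h, dif_pos (show (i : ℕ) < s - 2 by omega)]
    rw [if_pos (show ((⟨(i : ℕ), by omega⟩ : Fin (s - 2)) : ℕ) < j from h)]
  · exact absurd h hij
  · rw [if_neg (by omega), if_neg hij, if_neg hij1,
      dif_pos (show (i : ℕ) - 2 < s - 2 by have := i.isLt; omega)]
    rw [if_neg (show ¬ ((⟨(i : ℕ) - 2, by have := i.isLt; omega⟩ : Fin (s - 2)) : ℕ) < j by
      simp only []; omega)]
    exact congrArg n (Fin.ext (by simp only []; omega))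

lemma eq_insert2_del (j : ℕ) (hj : j + 2 ≤ s) (n : Fin s → Fin 2) (a b : Fin 2)
    (ha : n ⟨j, by omega⟩ = a) (hb : n ⟨j + 1, by omega⟩ = b) :
    insert2 s j (del s j n) a b = n := by
  funext i
  by_cases h1 : (i : ℕ) = j
  · have hi : i = (⟨j, by omega⟩ : Fin s) := Fin.ext h1
    rw [hi, insert2_apply_j j hj, ha]
  · by_cases h2 : (i : ℕ) = j + 1
    · have hi : i = (⟨j + 1, by omega⟩ : Fin s) := Fin.ext h2
      rw [hi, insert2_apply_j1 j hj, hb]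
    · exact insert2_del_off j hj n a b i h1 h2

lemma adj_exists (n : Fin s → Fin 2) (h : inv2 n ≠ 0) :
    ∃ j : ℕ, ∃ hj : j + 2 ≤ s, n ⟨j, by omega⟩ = 1 ∧ n ⟨j + 1, by omega⟩ = 0 := by
  have hne : (univ.filter fun p : Fin s × Fin s => p.1 < p.2 ∧ n p.1 = 1 ∧ n p.2 = 0).Nonempty := by
    rw [← Finset.card_pos]; unfold inv2 at h; omega
  obtain ⟨p, hp⟩ := hne
  simp only [Finset.mem_filter, Finset.mem_univ, true_and] at hp
  obtain ⟨ho, hp1, hp2⟩ := hp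
  have key : ∀ d : ℕ, ∀ p1 p2 : Fin s, (p2 : ℕ) - (p1 : ℕ) ≤ d → p1 < p2 → n p1 = 1 → n p2 = 0 →
      ∃ j : ℕ, ∃ hj : j + 2 ≤ s, n ⟨j, by omega⟩ = 1 ∧ n ⟨j + 1, by omega⟩ = 0 := by
    intro d
    induction d with
    | zero => intro p1 p2 hd hlt _ _; rw [Fin.lt_def] at hlt; omega
    | succ d ih =>
      intro p1 p2 hd hlt hn1 hn2
      have hlt' : (p1 : ℕ) < (p2 : ℕ) := hlt
      have hs2 : (p1 : ℕ) + 2 ≤ s := by have := p2.isLt; omega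
      have he1 : (⟨(p1 : ℕ), by omega⟩ : Fin s) = p1 := Fin.ext rfl
      by_cases hmid : (p1 : ℕ) + 1 = (p2 : ℕ)
      · refine ⟨(p1 : ℕ), hs2, ?_, ?_⟩
        · rw [he1]; exact hn1
        · have he2 : (⟨(p1 : ℕ) + 1, by omega⟩ : Fin s) = p2 := Fin.ext hmid
          rw [he2]; exact hn2
      · set mid : Fin s := ⟨(p1 : ℕ) + 1, by omega⟩ with hmiddef
        rcases (by omega : n mid = 0 ∨ n mid = 1) with h0 | h1
        · exact ⟨(p1 : ℕ), hs2, by rw [he1]; exact hn1, h0⟩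
        · exact ih mid p2 (by rw [hmiddef]; simp only []; omega)
            (by rw [Fin.lt_def, hmiddef]; simp only []; omega) h1 hn2
  exact key ((p.2 : ℕ) - (p.1 : ℕ)) p.1 p.2 le_rfl ho hp1 hp2

lemma wt_update (n : Fin s → Fin 2) (i : Fin s) (h1 : n i = 1) :
    wt (Function.update n i 0) + 1 = wt n := by
  unfold wt
  have key : (univ.filter fun j => Function.update n i 0 j = 1)
      = (univ.filter fun j => n j = 1).erase i := by
    ext j
    simp only [Finset.mem_filter, Finset.mem_univ, true_and, Finset.mem_erase]
    by_cases hji : j = i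
    · subst hji
      simp only [Function.update_self]
      constructor
      · intro h; exact absurd h (by omega)
      · rintro ⟨h, -⟩; exact absurd rfl h
    · rw [Function.update_of_ne hji]
      exact ⟨fun h => ⟨hji, h⟩, fun h => h.2⟩
  rw [key, Finset.card_erase_of_mem (by simp [h1])]
  have : 0 < (univ.filter fun j => n j = 1).card :=
    Finset.card_pos.mpr ⟨i, by simp [h1]⟩
  omega

lemma pos_split (n : Fin s → Fin 2) (i : Fin s) : aB n i + zB n i = (i : ℕ) := by
  unfold aB zB
  have h := Finset.card_filter_add_card_filter_not
    (s := univ.filter fun j : Fin s => j < i) (p := fun j => n j = 1)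
  rw [Finset.filter_filter, Finset.filter_filter] at h
  have hc : (univ.filter fun j : Fin s => j < i).card = (i : ℕ) := by
    have : (univ.filter fun j : Fin s => j < i) = univ.filter fun j : Fin s => (j : ℕ) < (i : ℕ) := by
      apply Finset.filter_congr; intro j _; exact ⟨fun h => h, fun h => h⟩
    rw [this, card_val_lt]
    have := i.isLt; omega
  rw [hc] at h
  have e2 : (univ.filter fun j : Fin s => j < i ∧ ¬ n j = 1)
      = univ.filter fun j : Fin s => j < i ∧ n j = 0 := by
    apply Finset.filter_congr; intro j _
    constructor
    · rintro ⟨h1, h2⟩; exact ⟨h1, by omega⟩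
    · rintro ⟨h1, h2⟩; exact ⟨h1, by omega⟩
  rw [e2] at h
  omega

lemma zeros_split (n : Fin s → Fin 2) (i : Fin s) (h1 : n i = 1) :
    zB n i + zA n i = s - wt n := by
  have hz : (univ.filter fun j => n j = 0).card = s - wt n := by
    have h := Finset.card_filter_add_card_filter_not (s := (univ : Finset (Fin s)))
      (p := fun j => n j = 1)
    have h2 : (univ.filter fun j => ¬ n j = 1) = univ.filter fun j => n j = 0 := by
      apply Finset.filter_congr; intro j _; constructor <;> (intro h; omega)
    rw [h2] at h
    simp only [Finset.card_univ, Fintype.card_fin] at h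
    unfold wt; omega
  have h := Finset.card_filter_add_card_filter_not
    (s := univ.filter fun j : Fin s => n j = 0) (p := fun j => j < i)
  rw [Finset.filter_filter, Finset.filter_filter, hz] at h
  have e1 : (univ.filter fun j : Fin s => n j = 0 ∧ j < i)
      = univ.filter fun j : Fin s => j < i ∧ n j = 0 := by
    apply Finset.filter_congr; intro j _; exact ⟨fun h => ⟨h.2, h.1⟩, fun h => ⟨h.2, h.1⟩⟩
  have e2 : (univ.filter fun j : Fin s => n j = 0 ∧ ¬ j < i)
      = univ.filter fun j : Fin s => i < j ∧ n j = 0 := by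
    apply Finset.filter_congr; intro j _
    constructor
    · rintro ⟨h0, h2⟩
      refine ⟨?_, h0⟩
      have hji : j ≠ i := by intro h; rw [h, h1] at h0; exact absurd h0 (by omega)
      rcases lt_trichotomy i j with hc | hc | hc
      · exact hc
      · exact absurd hc.symm hji
      · exact absurd hc h2
    · rintro ⟨h2, h0⟩
      exact ⟨h0, by rw [Fin.lt_def] at h2 ⊢; omega⟩
  rw [e1, e2] at h
  unfold zB zA
  omega

lemma inv2_update (n : Fin s → Fin 2) (i : Fin s) (h1 : n i = 1) :
    inv2 (Function.update n i 0) + zA n i = inv2 n + aB n i := by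
  classical
  set n' := Function.update n i 0 with hn'
  have hn'i : n' i = 0 := Function.update_self i 0 n
  have hoff : ∀ j, j ≠ i → n' j = n j := fun j hj => Function.update_of_ne hj 0 n
  -- split inv2 n by whether the pair touches i
  have split : ∀ m : Fin s → Fin 2,
      inv2 m = ((univ.filter fun p : Fin s × Fin s => p.1 < p.2 ∧ m p.1 = 1 ∧ m p.2 = 0).filter
          fun p => p.1 = i ∨ p.2 = i).card
        + ((univ.filter fun p : Fin s × Fin s => p.1 < p.2 ∧ m p.1 = 1 ∧ m p.2 = 0).filter
          fun p => ¬ (p.1 = i ∨ p.2 = i)).card := by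
    intro m
    unfold inv2
    exact (Finset.card_filter_add_card_filter_not (p := fun p : Fin s × Fin s => p.1 = i ∨ p.2 = i)).symm
  -- untouched pairs agree
  have same : ((univ.filter fun p : Fin s × Fin s => p.1 < p.2 ∧ n p.1 = 1 ∧ n p.2 = 0).filter
          fun p => ¬ (p.1 = i ∨ p.2 = i))
      = ((univ.filter fun p : Fin s × Fin s => p.1 < p.2 ∧ n' p.1 = 1 ∧ n' p.2 = 0).filter
          fun p => ¬ (p.1 = i ∨ p.2 = i)) := by
    ext p
    simp only [Finset.mem_filter, Finset.mem_univ, true_and, not_or]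
    constructor
    · rintro ⟨⟨ho, hp1, hp2⟩, hn1, hn2⟩
      exact ⟨⟨ho, by rw [hoff p.1 hn1]; exact hp1, by rw [hoff p.2 hn2]; exact hp2⟩, hn1, hn2⟩
    · rintro ⟨⟨ho, hp1, hp2⟩, hn1, hn2⟩
      rw [hoff p.1 hn1] at hp1
      rw [hoff p.2 hn2] at hp2
      exact ⟨⟨ho, hp1, hp2⟩, hn1, hn2⟩
  -- touched pairs for n: exactly (i, j) with i < j, n j = 0
  have touchn : ((univ.filter fun p : Fin s × Fin s => p.1 < p.2 ∧ n p.1 = 1 ∧ n p.2 = 0).filter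
          fun p => p.1 = i ∨ p.2 = i).card = zA n i := by
    unfold zA
    refine Finset.card_bij (fun p _ => p.2) ?_ ?_ ?_
    · intro p hp
      simp only [Finset.mem_filter, Finset.mem_univ, true_and] at hp
      obtain ⟨⟨ho, hp1, hp2⟩, hi⟩ := hp
      have hp1i : p.1 = i := by
        rcases hi with h | h
        · exact h
        · rw [h, h1] at hp2; exact absurd hp2 (by omega)
      simp only [Finset.mem_filter, Finset.mem_univ, true_and]
      exact ⟨by rw [← hp1i]; exact ho, hp2⟩
    · intro p hp p' hp' h
      simp only [Finset.mem_filter, Finset.mem_univ, true_and] at hp hp'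
      obtain ⟨⟨ho, hp1, hp2⟩, hi⟩ := hp
      obtain ⟨⟨ho', hp1', hp2'⟩, hi'⟩ := hp'
      have e1 : p.1 = i := by
        rcases hi with hh | hh
        · exact hh
        · rw [hh, h1] at hp2; exact absurd hp2 (by omega)
      have e1' : p'.1 = i := by
        rcases hi' with hh | hh
        · exact hh
        · rw [hh, h1] at hp2'; exact absurd hp2' (by omega)
      exact Prod.ext (by rw [e1, e1']) h
    · intro b hb
      simp only [Finset.mem_filter, Finset.mem_univ, true_and] at hb
      refine ⟨(i, b), ?_, rfl⟩
      refine Finset.mem_filter.mpr ⟨Finset.mem_filter.mpr ⟨Finset.mem_univ _, hb.1, h1, hb.2⟩, Or.inl rfl⟩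
  -- touched pairs for n': exactly (j, i) with j < i, n j = 1
  have touchn' : ((univ.filter fun p : Fin s × Fin s => p.1 < p.2 ∧ n' p.1 = 1 ∧ n' p.2 = 0).filter
          fun p => p.1 = i ∨ p.2 = i).card = aB n i := by
    unfold aB
    refine Finset.card_bij (fun p _ => p.1) ?_ ?_ ?_
    · intro p hp
      simp only [Finset.mem_filter, Finset.mem_univ, true_and] at hp
      obtain ⟨⟨ho, hp1, hp2⟩, hi⟩ := hp
      have hp2i : p.2 = i := by
        rcases hi with h | h
        · rw [h, hn'i] at hp1; exact absurd hp1 (by omega)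
        · exact h
      have hp1i : p.1 ≠ i := ne_of_lt (hp2i ▸ ho)
      simp only [Finset.mem_filter, Finset.mem_univ, true_and]
      rw [hoff p.1 hp1i] at hp1
      exact ⟨by rw [← hp2i]; exact ho, hp1⟩
    · intro p hp p' hp' h
      simp only [Finset.mem_filter, Finset.mem_univ, true_and] at hp hp'
      obtain ⟨⟨ho, hp1, hp2⟩, hi⟩ := hp
      obtain ⟨⟨ho', hp1', hp2'⟩, hi'⟩ := hp'
      have e1 : p.2 = i := by
        rcases hi with hh | hh
        · rw [hh, hn'i] at hp1; exact absurd hp1 (by omega)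
        · exact hh
      have e1' : p'.2 = i := by
        rcases hi' with hh | hh
        · rw [hh, hn'i] at hp1'; exact absurd hp1' (by omega)
        · exact hh
      exact Prod.ext h (by rw [e1, e1'])
    · intro b hb
      simp only [Finset.mem_filter, Finset.mem_univ, true_and] at hb
      refine ⟨(b, i), ?_, rfl⟩
      have hbi : b ≠ i := ne_of_lt hb.1
      exact Finset.mem_filter.mpr ⟨Finset.mem_filter.mpr
        ⟨Finset.mem_univ _, hb.1, by rw [hoff b hbi]; exact hb.2, hn'i⟩, Or.inr rfl⟩
  have hn := split n
  have hn2 := split n'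
  rw [touchn] at hn
  rw [touchn'] at hn2
  rw [← same] at hn2
  omega

lemma prod_zpow {α : Type*} (q : ℂ) (hq : q ≠ 0) (S : Finset α) (f : α → ℤ) :
    ∏ x ∈ S, q ^ f x = q ^ (∑ x ∈ S, f x) := by
  induction S using Finset.cons_induction with
  | empty => simp
  | cons a S ha ih => rw [Finset.prod_cons, Finset.sum_cons, ih, zpow_add₀ hq]

lemma prefP (q : ℂ) (hq : q ≠ 0) (n : Fin s → Fin 2) (i : Fin s) :
    (∏ j : Fin s, if j < i then q ^ (2 * ((n j : ℕ) : ℤ) - 1) else 1)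
      = q ^ (2 * (aB n i : ℤ) - (i : ℕ)) := by
  rw [← Finset.prod_filter, prod_zpow q hq]
  congr 1
  have hsum : ∑ j ∈ univ.filter (fun j => j < i), (2 * ((n j : ℕ) : ℤ) - 1)
      = 2 * (∑ j ∈ univ.filter (fun j => j < i), ((n j : ℕ) : ℤ))
        - (univ.filter (fun j : Fin s => j < i)).card := by
    rw [Finset.sum_sub_distrib, Finset.mul_sum, Finset.sum_const, nsmul_eq_mul, mul_one]
  rw [hsum]
  have h1 : ∑ j ∈ univ.filter (fun j => j < i), ((n j : ℕ) : ℤ) = (aB n i : ℤ) := by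
    have e : ∀ j ∈ univ.filter (fun j : Fin s => j < i),
        ((n j : ℕ) : ℤ) = if n j = 1 then 1 else 0 := by
      intro j _
      rcases (by omega : n j = 0 ∨ n j = 1) with h | h <;> rw [h] <;> simp
    rw [Finset.sum_congr rfl e, Finset.sum_boole, Finset.filter_filter]
    unfold aB
    norm_num
  have h2 : ((univ.filter (fun j : Fin s => j < i)).card : ℤ) = ((i : ℕ) : ℤ) := by
    have e : (univ.filter fun j : Fin s => j < i) = univ.filter fun j : Fin s => (j : ℕ) < (i : ℕ) := by
      apply Finset.filter_congr; intro j _; exact ⟨fun h => h, fun h => h⟩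
    rw [e, card_val_lt]
    have := i.isLt
    congr 1
    omega
  rw [h1, h2]

lemma aB_lt_aB (n : Fin s → Fin 2) (i i' : Fin s) (h : i < i') (h1 : n i = 1) :
    aB n i < aB n i' := by
  unfold aB
  apply Finset.card_lt_card
  constructor
  · intro j hj
    simp only [Finset.mem_filter, Finset.mem_univ, true_and] at hj ⊢
    exact ⟨lt_trans hj.1 h, hj.2⟩
  · intro hsub
    have : i ∈ univ.filter fun j => j < i' ∧ n j = 1 := by
      simp only [Finset.mem_filter, Finset.mem_univ, true_and]; exact ⟨h, h1⟩
    have := hsub this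
    simp only [Finset.mem_filter, Finset.mem_univ, true_and] at this
    exact lt_irrefl i this.1

lemma aB_lt_wt (n : Fin s → Fin 2) (i : Fin s) (h1 : n i = 1) : aB n i < wt n := by
  unfold aB wt
  apply Finset.card_lt_card
  constructor
  · intro j hj
    simp only [Finset.mem_filter, Finset.mem_univ, true_and] at hj ⊢
    exact hj.2
  · intro hsub
    have : i ∈ univ.filter fun j => n j = 1 := by simp [h1]
    have := hsub this
    simp only [Finset.mem_filter, Finset.mem_univ, true_and] at this
    exact lt_irrefl i this.1

lemma sum_aB (n : Fin s → Fin 2) (f : ℕ → ℂ) :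
    ∑ i ∈ univ.filter (fun i => n i = 1), f (aB n i) = ∑ t ∈ Finset.range (wt n), f t := by
  have hmem : ∀ (i : Fin s), i ∈ univ.filter (fun i => n i = 1) → aB n i ∈ Finset.range (wt n) := by
    intro i hi
    simp only [Finset.mem_filter, Finset.mem_univ, true_and] at hi
    rw [Finset.mem_range]
    exact aB_lt_wt n i hi
  have hinj : ∀ (a₁ a₂ : Fin s), a₁ ∈ univ.filter (fun i => n i = 1) →
      a₂ ∈ univ.filter (fun i => n i = 1) → aB n a₁ = aB n a₂ → a₁ = a₂ := by
    intro a₁ a₂ h₁ h₂ h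
    simp only [Finset.mem_filter, Finset.mem_univ, true_and] at h₁ h₂
    rcases lt_trichotomy a₁ a₂ with hc | hc | hc
    · exact absurd h (ne_of_lt (aB_lt_aB n a₁ a₂ hc h₁))
    · exact hc
    · exact absurd h.symm (ne_of_lt (aB_lt_aB n a₂ a₁ hc h₂))
  refine Finset.sum_bij (fun i _ => aB n i) hmem (fun a₁ h₁ a₂ h₂ => hinj a₁ a₂ h₁ h₂) ?_ (fun a _ => rfl)
  · intro b hb
    have hcard : (Finset.range (wt n)).card ≤ (univ.filter fun i => n i = 1).card := by
      rw [Finset.card_range]; unfold wt; exact le_rfl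
    obtain ⟨a, ha, he⟩ := Finset.surj_on_of_inj_on_of_card_le (fun i _ => aB n i) hmem
      (fun a₁ a₂ h₁ h₂ => hinj a₁ a₂ h₁ h₂) hcard b hb
    exact ⟨a, ha, he.symm⟩

/-- the scalar -/
def lam (q : ℂ) (s k : ℕ) : ℂ :=
  q ^ (-(((s - (k + 1) : ℕ) : ℤ))) * ∑ t ∈ Finset.range (k + 1), (q ^ 2) ^ t

lemma Fop_u (q : ℂ) (hq : q ≠ 0) (k : ℕ) :
    Fop q s (u q s k) = lam q s k • u q s (k + 1) := by
  funext n
  simp only [Fop, Pi.smul_apply, smul_eq_mul]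
  by_cases hw : wt n = k + 1
  · have key : ∀ i : Fin s,
        (∏ j : Fin s, if j < i then q ^ (2 * ((n j : ℕ) : ℤ) - 1) else 1) *
          (if n i = 1 then u q s k (Function.update n i 0) else 0)
        = if n i = 1 then
            (q ^ (-(((s - (k + 1) : ℕ) : ℤ))) * q ^ ((inv2 n : ℕ) : ℤ)) * (q ^ 2) ^ (aB n i)
          else 0 := by
      intro i
      by_cases h1 : n i = 1
      · rw [if_pos h1, if_pos h1]
        have hwu : wt (Function.update n i 0) = k := by
          have := wt_update n i h1; omega
        rw [show u q s k (Function.update n i 0) = q ^ inv2 (Function.update n i 0) by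
          unfold u; rw [if_pos hwu]]
        rw [prefP q hq n i]
        rw [show (q : ℂ) ^ inv2 (Function.update n i 0)
            = q ^ ((inv2 (Function.update n i 0) : ℕ) : ℤ) from (zpow_natCast q _).symm]
        rw [← zpow_add₀ hq]
        rw [show ((q : ℂ) ^ 2) ^ (aB n i) = q ^ (2 * aB n i) from (pow_mul q 2 _).symm]
        rw [show (q : ℂ) ^ (2 * aB n i) = q ^ ((2 * aB n i : ℕ) : ℤ) from (zpow_natCast q _).symm]
        rw [← zpow_add₀ hq, ← zpow_add₀ hq]
        congr 1
        have e1 := inv2_update n i h1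
        have e2 := pos_split n i
        have e3 := zeros_split n i h1
        have e4 := wt_le n
        rw [hw] at e3
        push_cast
        omega
      · rw [if_neg h1, if_neg h1, mul_zero]
    rw [Finset.sum_congr rfl (fun i _ => key i)]
    rw [← Finset.sum_filter]
    rw [show ∑ i ∈ univ.filter (fun i => n i = 1),
          (q ^ (-(((s - (k + 1) : ℕ) : ℤ))) * q ^ ((inv2 n : ℕ) : ℤ)) * (q ^ 2) ^ (aB n i)
        = (q ^ (-(((s - (k + 1) : ℕ) : ℤ))) * q ^ ((inv2 n : ℕ) : ℤ)) *
            ∑ i ∈ univ.filter (fun i => n i = 1), (q ^ 2) ^ (aB n i) from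
      (Finset.mul_sum _ _ _).symm]
    rw [sum_aB n (fun t => (q ^ 2) ^ t), hw]
    unfold u lam
    rw [if_pos hw]
    rw [show (q : ℂ) ^ inv2 n = q ^ ((inv2 n : ℕ) : ℤ) from (zpow_natCast q _).symm]
    ring
  · have key : ∀ i : Fin s,
        (∏ j : Fin s, if j < i then q ^ (2 * ((n j : ℕ) : ℤ) - 1) else 1) *
          (if n i = 1 then u q s k (Function.update n i 0) else 0) = 0 := by
      intro i
      by_cases h1 : n i = 1
      · rw [if_pos h1]
        have hwu : wt (Function.update n i 0) ≠ k := by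
          have := wt_update n i h1; omega
        rw [show u q s k (Function.update n i 0) = 0 by unfold u; rw [if_neg hwu]]
        rw [mul_zero]
      · rw [if_neg h1, mul_zero]
    rw [Finset.sum_congr rfl (fun i _ => key i), Finset.sum_const_zero]
    unfold u
    rw [if_neg hw, mul_zero]

variable {q : ℂ}

lemma hq0 (hq : NotRootOfUnity q) : q ≠ 0 := hq.1

lemma pow_ne_one (hq : NotRootOfUnity q) (m : ℕ) (hm : m ≠ 0) : q ^ m ≠ 1 := by
  have := hq.2 (m : ℤ) (by exact_mod_cast hm)
  rwa [zpow_natCast] at this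

lemma sub_inv_ne (hq : NotRootOfUnity q) : q - q⁻¹ ≠ 0 := by
  intro h
  have h1 : q = q⁻¹ := sub_eq_zero.mp h
  have h2 : q ^ 2 = 1 := by
    rw [sq]; nth_rewrite 2 [h1]; exact mul_inv_cancel₀ hq.1
  exact pow_ne_one hq 2 (by norm_num) h2

lemma qint2_ne (hq : NotRootOfUnity q) : qint q 2 ≠ 0 := by
  unfold qint
  apply div_ne_zero _ (sub_inv_ne hq)
  intro h
  have h1 : q ^ (2 : ℤ) = q ^ (-2 : ℤ) := sub_eq_zero.mp h
  have h2 : q ^ (4 : ℤ) = 1 := by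
    have := congrArg (fun x => x * q ^ (2 : ℤ)) h1
    rw [← zpow_add₀ (hq0 hq), ← zpow_add₀ (hq0 hq)] at this
    norm_num at this
    exact this
  exact hq.2 4 (by norm_num) h2

lemma lam_ne (hq : NotRootOfUnity q) (s k : ℕ) : lam q s k ≠ 0 := by
  unfold lam
  apply mul_ne_zero (zpow_ne_zero _ (hq0 hq))
  intro h
  have hg := geom_sum_mul (q ^ 2) (k + 1)
  rw [h, zero_mul] at hg
  have h1 : (q ^ 2) ^ (k + 1) = 1 := eq_of_sub_eq_zero hg.symm
  rw [← pow_mul] at h1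
  exact pow_ne_one hq (2 * (k + 1)) (by omega) h1

lemma pival_c_ne (hq : NotRootOfUnity q) : (q⁻¹ - q) / qint q 2 ≠ 0 := by
  apply div_ne_zero _ (qint2_ne hq)
  intro h
  have h1 : q⁻¹ = q := sub_eq_zero.mp h
  have h2 : q ^ 2 = 1 := by
    rw [sq]; nth_rewrite 1 [← h1]; exact inv_mul_cancel₀ hq.1
  exact pow_ne_one hq 2 (by norm_num) h2

lemma Fop_smul (q : ℂ) (s : ℕ) (c : ℂ) (v : V s) : Fop q s (c • v) = c • Fop q s v := by
  funext m
  simp only [Fop, Pi.smul_apply, smul_eq_mul, Finset.mul_sum]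
  apply Finset.sum_congr rfl
  intro i _
  split_ifs <;> ring

lemma e0_eq_u (q : ℂ) (s : ℕ) : e0 s = u q s 0 := by
  funext n
  unfold e0 u
  by_cases h : ∀ i, n i = 0
  · rw [if_pos h, if_pos ((wt_eq_zero_iff n).mpr h),
      inv2_eq_zero_of_wt_zero n ((wt_eq_zero_iff n).mpr h), pow_zero]
  · rw [if_neg h, if_neg (fun hw => h ((wt_eq_zero_iff n).mp hw))]

lemma theta_eq {q : ℂ} (hq : NotRootOfUnity q) (s k : ℕ) :
    ∃ c : ℂ, c ≠ 0 ∧ theta q s k = c • u q s k := by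
  induction k with
  | zero =>
    refine ⟨1, one_ne_zero, ?_⟩
    rw [one_smul]
    unfold theta
    rw [Function.iterate_zero, id_eq]
    exact e0_eq_u q s
  | succ k ih =>
    obtain ⟨c, hc, hth⟩ := ih
    refine ⟨c * lam q s k, mul_ne_zero hc (lam_ne hq s k), ?_⟩
    unfold theta
    rw [Function.iterate_succ_apply']
    show Fop q s (theta q s k) = _
    rw [hth, Fop_smul, Fop_u q (hq0 hq) k, smul_smul]

/-- the swap relation -/
def Rprop (q : ℂ) (s : ℕ) (v : V s) : Prop :=
  ∀ j : ℕ, j + 2 ≤ s → ∀ m : Fin (s - 2) → Fin 2,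
    v (insert2 s j m 0 1) = q⁻¹ * v (insert2 s j m 1 0)

lemma swap_pair (j : ℕ) (hj : j + 2 ≤ s) (m : Fin (s - 2) → Fin 2) :
    wt (insert2 s j m 0 1) = wt (insert2 s j m 1 0) ∧
      inv2 (insert2 s j m 1 0) = inv2 (insert2 s j m 0 1) + 1 := by
  set n := insert2 s j m 1 0
  set n' := insert2 s j m 0 1
  have jj : Fin s := ⟨j, by omega⟩
  refine ⟨?_, ?_⟩ <;>
  · first
    | exact swap_wt n n' ⟨j, by omega⟩ ⟨j + 1, by omega⟩
        (insert2_apply_j j hj m 1 0) (insert2_apply_j1 j hj m 1 0)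
        (insert2_apply_j j hj m 0 1) (insert2_apply_j1 j hj m 0 1)
        (fun i h1 h2 => insert2_apply_off j m 1 0 0 1 i
          (fun h => h1 (Fin.ext h)) (fun h => h2 (Fin.ext h)))
    | exact swap_inv2 n n' ⟨j, by omega⟩ ⟨j + 1, by omega⟩ rfl
        (insert2_apply_j j hj m 1 0) (insert2_apply_j1 j hj m 1 0)
        (insert2_apply_j j hj m 0 1) (insert2_apply_j1 j hj m 0 1)
        (fun i h1 h2 => insert2_apply_off j m 1 0 0 1 i
          (fun h => h1 (Fin.ext h)) (fun h => h2 (Fin.ext h)))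

lemma u_Rprop {q : ℂ} (hq : q ≠ 0) (s k : ℕ) : Rprop q s (u q s k) := by
  intro j hj m
  obtain ⟨hwt, hinv⟩ := swap_pair j hj m
  unfold u
  rw [hwt, hinv]
  by_cases h : wt (insert2 s j m 1 0) = k
  · rw [if_pos h, if_pos h, pow_succ]
    field_simp
  · rw [if_neg h, if_neg h, mul_zero]

/-- main structure lemma -/
lemma Rprop_eval {q : ℂ} (hq : q ≠ 0) {v : V s} (hR : Rprop q s v) (n : Fin s → Fin 2) :
    v n = v (sorted s (wt n)) * q ^ inv2 n := by
  have main : ∀ N : ℕ, ∀ n : Fin s → Fin 2, inv2 n ≤ N → v n = v (sorted s (wt n)) * q ^ inv2 n := by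
    intro N
    induction N with
    | zero =>
      intro n hn
      have h0 : inv2 n = 0 := by omega
      rw [h0, pow_zero, mul_one, ← sort_of_inv2_zero n h0]
    | succ N ih =>
      intro n hn
      by_cases h0 : inv2 n = 0
      · rw [h0, pow_zero, mul_one, ← sort_of_inv2_zero n h0]
      · obtain ⟨j, hj, h1, h2⟩ := adj_exists n h0
        have hrec : insert2 s j (del s j n) 1 0 = n :=
          eq_insert2_del (s := s) j hj n 1 0 h1 h2
        set m := del s j n with hm
        have hrel : v (insert2 s j m 0 1) = q⁻¹ * v n := by
          have := hR j hj m
          rwa [hrec] at this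
        have hvn : v n = q * v (insert2 s j m 0 1) := by
          rw [hrel, ← mul_assoc, mul_inv_cancel₀ hq, one_mul]
        have hpair := swap_pair j hj m
        rw [hrec] at hpair
        obtain ⟨hwt, hinv⟩ := hpair
        have hle : inv2 (insert2 s j m 0 1) ≤ N := by omega
        rw [hvn, ih (insert2 s j m 0 1) hle, hwt, hinv, pow_succ]
        ring
  exact main (inv2 n) n le_rfl

/-- pihat characterization -/
lemma pihat_char {q : ℂ} (hq : NotRootOfUnity q) (s j : ℕ) (hj : j + 2 ≤ s) (v : V s) :
    pihat q s j v = 0 ↔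
      ∀ m : Fin (s - 2) → Fin 2, v (insert2 s j m 0 1) = q⁻¹ * v (insert2 s j m 1 0) := by
  have hpiv00 : pival q 0 0 = 0 := by simp [pival]
  have hpiv11 : pival q 1 1 = 0 := by simp [pival]
  have hpiv01 : pival q 0 1 = (q⁻¹ - q) / qint q 2 := by simp [pival]
  have hpiv10 : pival q 1 0 = (1 - q ^ (-2 : ℤ)) / qint q 2 := by simp [pival]
  have hkey : pival q 1 0 = -(((q⁻¹ - q) / qint q 2) * q⁻¹) := by
    rw [hpiv10]
    have h2 : q ^ (-2 : ℤ) = (q ^ 2)⁻¹ := by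
      rw [zpow_neg]; norm_cast
    have h4 : -((q⁻¹ - q) * q⁻¹) = 1 - (q ^ 2)⁻¹ := by
      rw [show -((q⁻¹ - q) * q⁻¹) = (q - q⁻¹) * q⁻¹ by ring, sub_mul,
        mul_inv_cancel₀ (hq0 hq), ← mul_inv, ← sq]
    have h3 : -(((q⁻¹ - q) / qint q 2) * q⁻¹) = (1 - (q ^ 2)⁻¹) / qint q 2 := by
      rw [div_mul_eq_mul_div, ← neg_div, h4]
    rw [h2, h3]
  have expand : ∀ m : Fin (s - 2) → Fin 2, pihat q s j v m =
      ((q⁻¹ - q) / qint q 2) * (v (insert2 s j m 0 1) - q⁻¹ * v (insert2 s j m 1 0)) := by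
    intro m
    unfold pihat
    rw [Fin.sum_univ_two]
    rw [Fin.sum_univ_two, Fin.sum_univ_two]
    rw [hpiv00, hpiv11, hpiv01, hkey]
    ring
  constructor
  · intro h m
    have hm : pihat q s j v m = 0 := by rw [h]; rfl
    rw [expand m] at hm
    rcases mul_eq_zero.mp hm with h' | h'
    · exact absurd h' (pival_c_ne hq)
    · have := sub_eq_zero.mp h'
      exact this
  · intro h
    funext m
    rw [Pi.zero_apply, expand m, h m, sub_self, mul_zero]


/-- the relation subspace -/
def Wsub (q : ℂ) (s : ℕ) : Submodule ℂ (V s) where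
  carrier := {w : V s | Rprop q s w}
  add_mem' := by
    intro a b haa hbb j hj m
    simp only [Pi.add_apply]
    rw [haa j hj m, hbb j hj m]
    ring
  zero_mem' := by intro j hj m; simp
  smul_mem' := by
    intro c a haa j hj m
    simp only [Pi.smul_apply, smul_eq_mul]
    rw [haa j hj m]
    ring

lemma mem_Wsub {q : ℂ} {s : ℕ} {w : V s} (h : Rprop q s w) : w ∈ Wsub q s := h


end JW

/-- For `v ∈ M₂^{⊗s}` (`s ≥ 1`), the following are equivalent:
(a) `π̂_j^(1)(v) = 0` for all `j ∈ {1,…,s-1}` (0-indexed: all `j` with `j+2 ≤ s`);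
(b) `v` lies in the unique subrepresentation of `M₂^{⊗s}` isomorphic to the
`(s+1)`-dimensional irreducible `M_{s+1}`, namely `span{θ₀^(s),…,θ_s^(s)}`. -/
theorem vanishing_projections_iff_in_top_component
    (q : ℂ) (hq : NotRootOfUnity q) (s : ℕ) (hs : 1 ≤ s) (v : V s) :
    (∀ j : ℕ, j + 2 ≤ s → pihat q s j v = 0) ↔
      v ∈ Submodule.span ℂ (Set.range fun l : Fin (s + 1) => theta q s l) := by
  constructor
  · intro ha
    have hR : JW.Rprop q s v := fun j hj m => (JW.pihat_char hq s j hj v).mp (ha j hj) m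
    have hv : v = ∑ k ∈ Finset.range (s + 1), v (JW.sorted s k) • JW.u q s k := by
      funext n
      rw [Finset.sum_apply]
      have hterm : ∀ k ∈ Finset.range (s + 1),
          (v (JW.sorted s k) • JW.u q s k) n
            = if k = JW.wt n then v (JW.sorted s k) * q ^ JW.inv2 n else 0 := by
        intro k _
        simp only [Pi.smul_apply, smul_eq_mul, JW.u]
        by_cases h : JW.wt n = k
        · rw [if_pos h, if_pos h.symm]
        · rw [if_neg h, if_neg (fun hh => h hh.symm), mul_zero]
      rw [Finset.sum_congr rfl hterm, Finset.sum_ite_eq' (Finset.range (s + 1)) (JW.wt n)]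
      rw [if_pos (Finset.mem_range.mpr (by have := JW.wt_le n; omega))]
      exact JW.Rprop_eval hq.1 hR n
    rw [hv]
    apply Submodule.sum_mem
    intro k hk
    obtain ⟨c, hc, hth⟩ := JW.theta_eq hq s k
    have hu : JW.u q s k = c⁻¹ • theta q s k := by
      rw [hth, smul_smul, inv_mul_cancel₀ hc, one_smul]
    rw [hu]
    apply Submodule.smul_mem
    apply Submodule.smul_mem
    apply Submodule.subset_span
    exact ⟨⟨k, Finset.mem_range.mp hk⟩, rfl⟩
  · intro hv
    have hle : Submodule.span ℂ (Set.range fun l : Fin (s + 1) => theta q s l) ≤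
        JW.Wsub q s := by
      rw [Submodule.span_le]
      rintro _ ⟨l, rfl⟩
      obtain ⟨c, hc, hth⟩ := JW.theta_eq hq s (l : ℕ)
      show theta q s (l : ℕ) ∈ (JW.Wsub q s : Set (V s))
      rw [hth]
      exact (JW.Wsub q s).smul_mem c (JW.u_Rprop hq.1 s (l : ℕ))
    have hRv : JW.Rprop q s v := hle hv
    intro j hj
    exact (JW.pihat_char hq s j hj v).mpr (fun m => hRv j hj m)
end
end
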